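/- arXiv:1611.06726 — 12 statements merged into one kernel-verified Lean document; each statement's English description precedes it below -/
import Mathlib

section
/- Let A = (a_{jk}) be a symmetric n×n complex matrix. Then the supremum, over all m ∈ ℕ and all vectors x_1,…,x_n ∈ ℂ^m with ‖x_j‖_2 ≤ 1, of |Σ_{j,k=1}^n a_{jk} ⟨x_j, x_k⟩| (Hermitian inner product on ℂ^m) is equal to the supremum, over all m ∈ ℕ and all vectors R_1,…,R_n ∈ ℝ^m with ‖R_j‖_2 ≤ 1, of |Σ_{j,k=1}^n a_{jk} ⟨R_j, R_k⟩| (Euclidean inner product on ℝ^m). -/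
open Finset in
private lemma sets_eq (n : ℕ) (A : Matrix (Fin n) (Fin n) ℂ) (hA : A.IsSymm) :
    {r : ℝ | ∃ (m : ℕ) (x : Fin n → EuclideanSpace ℂ (Fin m)),
        (∀ j, ‖x j‖ ≤ 1) ∧
        r = ‖∑ j, ∑ k, A j k * (inner ℂ (x j) (x k) : ℂ)‖} =
    {r : ℝ | ∃ (m : ℕ) (R : Fin n → EuclideanSpace ℝ (Fin m)),
        (∀ j, ‖R j‖ ≤ 1) ∧
        r = ‖∑ j, ∑ k, A j k * ((inner ℝ (R j) (R k) : ℝ) : ℂ)‖} := by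
  ext r
  simp only [Set.mem_setOf_eq]
  constructor
  · rintro ⟨m, x, hx, rfl⟩
    set R : Fin n → EuclideanSpace ℝ (Fin (m + m)) := fun j =>
      WithLp.toLp 2 (fun p => Sum.elim (fun i => (x j i).re) (fun i => (x j i).im)
        (finSumFinEquiv.symm p) : Fin (m + m) → ℝ) with hR
    refine ⟨m + m, R, ?_, ?_⟩
    · intro j
      have h1 : ‖R j‖ = ‖x j‖ := by
        rw [EuclideanSpace.norm_eq, EuclideanSpace.norm_eq]
        congr 1
        rw [← Equiv.sum_comp finSumFinEquiv
          (fun p => ‖R j p‖ ^ 2), Fintype.sum_sum_type]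
        simp only [hR, PiLp.toLp_apply, Equiv.symm_apply_apply, Sum.elim_inl, Sum.elim_inr,
          Complex.sq_norm]
        rw [← Finset.sum_add_distrib]
        congr 1
        ext i
        simp [Real.norm_eq_abs, sq_abs, Complex.sq_norm, Complex.normSq_apply]
        ring
      rw [h1]; exact hx j
    · -- key identity via symmetry of A
      have hinner : ∀ j k, ((inner ℝ (R j) (R k) : ℝ) : ℂ) =
          ((inner ℂ (x j) (x k) : ℂ) + (inner ℂ (x k) (x j) : ℂ)) / 2 := by
        intro j k
        have h2 : (inner ℂ (x k) (x j) : ℂ) = (starRingEnd ℂ) (inner ℂ (x j) (x k) : ℂ) :=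
          (inner_conj_symm (x k) (x j)).symm
        have h3 : (inner ℝ (R j) (R k) : ℝ) = (inner ℂ (x j) (x k) : ℂ).re := by
          simp only [PiLp.inner_apply, RCLike.inner_apply', starRingEnd_apply, star_trivial]
          rw [← Equiv.sum_comp finSumFinEquiv
            (fun p => R j p * R k p), Fintype.sum_sum_type]
          simp only [hR, PiLp.toLp_apply, Equiv.symm_apply_apply, Sum.elim_inl, Sum.elim_inr]
          rw [Complex.re_sum, ← Finset.sum_add_distrib]
          congr 1
          ext i
          simp [Complex.mul_re]
        rw [h3, h2, Complex.add_conj]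
        simp
      have hswap : (∑ j, ∑ k, A j k * (inner ℂ (x j) (x k) : ℂ)) =
          ∑ j, ∑ k, A j k * (inner ℂ (x k) (x j) : ℂ) := by
        rw [Finset.sum_comm]
        refine Finset.sum_congr rfl fun j _ => Finset.sum_congr rfl fun k _ => ?_
        have hsym : A k j = A j k := congrFun (congrFun hA j) k
        rw [hsym]
      congr 1
      calc ∑ j, ∑ k, A j k * (inner ℂ (x j) (x k) : ℂ)
          = (∑ j, ∑ k, A j k * (inner ℂ (x j) (x k) : ℂ)
            + ∑ j, ∑ k, A j k * (inner ℂ (x k) (x j) : ℂ)) / 2 := by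
            rw [← hswap]; ring
        _ = ∑ j, ∑ k, A j k * ((inner ℝ (R j) (R k) : ℝ) : ℂ) := by
            rw [← Finset.sum_add_distrib, Finset.sum_div]
            refine Finset.sum_congr rfl fun j _ => ?_
            rw [← Finset.sum_add_distrib, Finset.sum_div]
            refine Finset.sum_congr rfl fun k _ => ?_
            rw [hinner]
            ring
  · rintro ⟨m, R, hR, rfl⟩
    set x : Fin n → EuclideanSpace ℂ (Fin m) := fun j =>
      WithLp.toLp 2 (fun p => ((R j p : ℝ) : ℂ) : Fin m → ℂ) with hx
    refine ⟨m, x, ?_, ?_⟩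
    · intro j
      have : ‖x j‖ = ‖R j‖ := by
        rw [EuclideanSpace.norm_eq, EuclideanSpace.norm_eq]
        congr 1
        refine Finset.sum_congr rfl fun i _ => ?_
        simp [hx]
      rw [this]; exact hR j
    · congr 1
      refine Finset.sum_congr rfl fun j _ => Finset.sum_congr rfl fun k _ => ?_
      congr 1
      simp only [PiLp.inner_apply, RCLike.inner_apply', hx, PiLp.toLp_apply, starRingEnd_apply,
        star_trivial]
      push_cast
      refine Finset.sum_congr rfl fun i _ => ?_
      simp

/-- Lemma 2.2 of Gupta–Ray.  For a symmetric `n × n` complex matrix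
`A = (a_{jk})`, the supremum over all `m` and all tuples of vectors in `ℂ^m` of norm at most one
of `|Σ_{j,k} a_{jk} ⟨x_j, x_k⟩|` coincides with the corresponding supremum taken over tuples of
vectors in `ℝ^m` of norm at most one. -/
theorem stmt0 (n : ℕ) (A : Matrix (Fin n) (Fin n) ℂ) (hA : A.IsSymm) :
    sSup {r : ℝ | ∃ (m : ℕ) (x : Fin n → EuclideanSpace ℂ (Fin m)),
        (∀ j, ‖x j‖ ≤ 1) ∧
        r = ‖∑ j, ∑ k, A j k * (inner ℂ (x j) (x k) : ℂ)‖} =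
    sSup {r : ℝ | ∃ (m : ℕ) (R : Fin n → EuclideanSpace ℝ (Fin m)),
        (∀ j, ‖R j‖ ≤ 1) ∧
        r = ‖∑ j, ∑ k, A j k * ((inner ℝ (R j) (R k) : ℝ) : ℂ)‖} := by
  rw [sets_eq n A hA]
end

section
/- Let A = (a_{jk}) be a positive semidefinite n×n complex matrix. Then sup{|Σ_{j,k=1}^n a_{jk} z_j z_k| : z ∈ ℂ^n, |z_j| = 1 for all j} = max{Σ_{j,k=1}^n a_{jk} s_j s_k : s ∈ {−1, 1}^n} (the right-hand sums are nonnegative real numbers). -/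
open scoped ComplexOrder
open Finset

private lemma quad_bound' (a b c t : ℝ) (ha : 0 ≤ a) (ht : |t| ≤ 1) :
    a * t^2 + b * t + c ≤ a * (if 0 ≤ b then (1:ℝ) else -1)^2 + b * (if 0 ≤ b then (1:ℝ) else -1) + c := by
  have h1 : t^2 ≤ 1 := by nlinarith [sq_abs t, abs_nonneg t]
  have h2 : b * t ≤ |b| := by
    calc b * t ≤ |b * t| := le_abs_self _
    _ = |b| * |t| := abs_mul _ _
    _ ≤ |b| * 1 := mul_le_mul_of_nonneg_left ht (abs_nonneg b)
    _ = |b| := mul_one _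
  split_ifs with hb
  · have := abs_of_nonneg hb; nlinarith
  · have := abs_of_neg (lt_of_not_ge hb); nlinarith

private lemma cube_max' (n : ℕ) (B : Matrix (Fin n) (Fin n) ℝ) (hB : ∀ j, 0 ≤ B j j) (M : ℝ)
    (hM : ∀ s : Fin n → ℝ, (∀ j, s j = 1 ∨ s j = -1) → ∑ j, ∑ k, B j k * s j * s k ≤ M)
    (x : Fin n → ℝ) (hx : ∀ j, |x j| ≤ 1) :
    ∑ j, ∑ k, B j k * x j * x k ≤ M := by
  suffices h : ∀ F : Finset (Fin n), ∀ x : Fin n → ℝ, (∀ j, |x j| ≤ 1) →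
      (∀ j, j ∉ F → x j = 1 ∨ x j = -1) → ∑ j, ∑ k, B j k * x j * x k ≤ M by
    exact h univ x hx (fun j hj => absurd (mem_univ j) hj)
  intro F
  induction F using Finset.induction with
  | empty => intro x hx hs; exact hM x fun j => hs j (notMem_empty j)
  | @insert j F hjF ih =>
    intro x hx hs
    set b : ℝ := ∑ k ∈ univ.erase j, (B j k + B k j) * x k with hbdef
    set c : ℝ := ∑ p ∈ univ.erase j, ∑ q ∈ univ.erase j, B p q * x p * x q with hcdef
    have key : ∀ t : ℝ, ∑ p, ∑ q, B p q * (Function.update x j t p) * (Function.update x j t q)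
        = B j j * t^2 + b * t + c := by
      intro t
      rw [← Finset.sum_erase_add univ _ (mem_univ j)]
      have h1 : ∀ p ∈ univ.erase j, ∑ q, B p q * Function.update x j t p * Function.update x j t q
          = (∑ q ∈ univ.erase j, B p q * x p * x q) + B p j * x p * t := by
        intro p hp
        rw [← Finset.sum_erase_add univ _ (mem_univ j), Function.update_self,
            Function.update_of_ne (mem_erase.mp hp).1]
        congr 1
        exact Finset.sum_congr rfl fun q hq => by rw [Function.update_of_ne (mem_erase.mp hq).1]
      have h2 : ∑ q, B j q * Function.update x j t j * Function.update x j t q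
          = (∑ q ∈ univ.erase j, B j q * x q * t) + B j j * t^2 := by
        rw [← Finset.sum_erase_add univ _ (mem_univ j), Function.update_self]
        congr 1
        · exact Finset.sum_congr rfl fun q hq => by
            rw [Function.update_of_ne (mem_erase.mp hq).1]; ring
        · ring
      rw [Finset.sum_congr rfl h1, h2, Finset.sum_add_distrib]
      have h3 : b * t = (∑ p ∈ univ.erase j, B p j * x p * t) + ∑ q ∈ univ.erase j, B j q * x q * t := by
        rw [hbdef, Finset.sum_mul, ← Finset.sum_add_distrib]
        exact Finset.sum_congr rfl fun k _ => by ring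
      rw [h3]; ring
    set s : ℝ := if 0 ≤ b then (1:ℝ) else -1 with hsdef
    have hx' : ∀ p, |Function.update x j s p| ≤ 1 := by
      intro p
      rcases eq_or_ne p j with rfl | hp
      · rw [Function.update_self, hsdef]; split_ifs <;> norm_num
      · rw [Function.update_of_ne hp]; exact hx p
    have hs' : ∀ p, p ∉ F → Function.update x j s p = 1 ∨ Function.update x j s p = -1 := by
      intro p hp
      rcases eq_or_ne p j with rfl | hpj
      · rw [Function.update_self, hsdef]; split_ifs with h
        · exact Or.inl rfl
        · exact Or.inr rfl
      · rw [Function.update_of_ne hpj]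
        exact hs p (by simp [hpj, hp])
    calc ∑ p, ∑ q, B p q * x p * x q
        = ∑ p, ∑ q, B p q * (Function.update x j (x j) p) * (Function.update x j (x j) q) := by
          rw [Function.update_eq_self]
      _ = B j j * (x j)^2 + b * (x j) + c := key (x j)
      _ ≤ B j j * s^2 + b * s + c := quad_bound' _ _ _ _ (hB j) (hx j)
      _ = ∑ p, ∑ q, B p q * (Function.update x j s p) * (Function.update x j s q) := (key s).symm
      _ ≤ M := ih _ hx' hs'

private lemma sym_sum' (n : ℕ) (A : Matrix (Fin n) (Fin n) ℂ) (hA : A.IsHermitian)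
    (z : Fin n → ℂ) :
    ∑ j, ∑ k, A j k * z j * z k = ∑ j, ∑ k, (((A j k).re : ℝ) : ℂ) * z j * z k := by
  have hswap : ∑ j, ∑ k, A j k * z j * z k = ∑ j, ∑ k, A k j * z j * z k := by
    rw [Finset.sum_comm]
    exact Finset.sum_congr rfl fun j _ => Finset.sum_congr rfl fun k _ => by ring
  have h2 : ∀ j k : Fin n, (((A j k).re : ℝ) : ℂ) * z j * z k
      = (A j k * z j * z k + A k j * z j * z k) / 2 := by
    intro j k
    have h : (starRingEnd ℂ) (A j k) = A k j := hA.apply k j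
    rw [← h, Complex.re_eq_add_conj]; ring
  simp only [h2, Finset.sum_add_distrib, ← Finset.sum_div]
  rw [← hswap]; ring

private lemma re_decomp' (n : ℕ) (B : Matrix (Fin n) (Fin n) ℝ) (w : Fin n → ℂ) :
    (∑ j, ∑ k, ((B j k : ℝ) : ℂ) * w j * w k).re
      = ∑ j, ∑ k, B j k * (w j).re * (w k).re - ∑ j, ∑ k, B j k * (w j).im * (w k).im := by
  rw [Complex.re_sum]
  simp only [Complex.re_sum]
  rw [← Finset.sum_sub_distrib]
  refine Finset.sum_congr rfl fun j _ => ?_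
  rw [← Finset.sum_sub_distrib]
  refine Finset.sum_congr rfl fun k _ => ?_
  simp [Complex.mul_re, Complex.mul_im]

private lemma psd_real' (n : ℕ) (A : Matrix (Fin n) (Fin n) ℂ) (hA : A.PosSemidef)
    (y : Fin n → ℝ) :
    0 ≤ ∑ j, ∑ k, (A j k).re * y j * y k := by
  have h := hA.dotProduct_mulVec_nonneg (fun j => (y j : ℂ))
  rw [Complex.le_def] at h
  have h1 : dotProduct (star fun j => ((y j : ℂ))) (A.mulVec fun j => ((y j : ℂ)))
      = ∑ j, ∑ k, A j k * ((y j : ℂ)) * ((y k : ℂ)) := by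
    simp only [dotProduct, Matrix.mulVec, Pi.star_apply, Complex.star_def,
      Complex.conj_ofReal, Finset.mul_sum]
    exact Finset.sum_congr rfl fun j _ => Finset.sum_congr rfl fun k _ => by ring
  rw [h1] at h
  have h2 := h.1
  rw [Complex.re_sum] at h2
  simp only [Complex.re_sum] at h2
  have h3 : ∑ j, ∑ k, (A j k).re * y j * y k = ∑ j, ∑ k, (A j k * (y j : ℂ) * (y k : ℂ)).re := by
    refine Finset.sum_congr rfl fun j _ => Finset.sum_congr rfl fun k _ => ?_
    simp [Complex.mul_re]
  rw [h3]
  simpa using h2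

private lemma diag_re_nonneg' (n : ℕ) (A : Matrix (Fin n) (Fin n) ℂ) (hA : A.PosSemidef)
    (j : Fin n) : 0 ≤ (A j j).re := by
  have h := psd_real' n A hA (fun p => if p = j then 1 else 0)
  simpa [ite_mul, mul_ite, Finset.sum_ite_eq'] using h

private lemma torus_bound' (n : ℕ) (A : Matrix (Fin n) (Fin n) ℂ) (hA : A.PosSemidef) (M : ℝ)
    (hM : ∀ s : Fin n → ℝ, (∀ j, s j = 1 ∨ s j = -1) → ∑ j, ∑ k, (A j k).re * s j * s k ≤ M)
    (z : Fin n → ℂ) (hz : ∀ j, ‖z j‖ = 1) :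
    ‖∑ j, ∑ k, A j k * z j * z k‖ ≤ M := by
  set c := ∑ j, ∑ k, A j k * z j * z k with hc
  set α : ℂ := Complex.exp (-(c.arg/2 : ℝ) * Complex.I) with hα
  have habs : ‖α‖ = 1 := by
    rw [hα, Complex.norm_exp]
    norm_num
  set w : Fin n → ℂ := fun j => α * z j with hw
  have hFw : ∑ j, ∑ k, A j k * w j * w k = α^2 * c := by
    rw [hc, Finset.mul_sum]
    refine Finset.sum_congr rfl fun j _ => ?_
    rw [Finset.mul_sum]
    exact Finset.sum_congr rfl fun k _ => by simp only [hw]; ring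
  have hval : α^2 * c = (‖c‖ : ℂ) := by
    have key : α^2 * Complex.exp ((c.arg : ℝ) * Complex.I) = 1 := by
      rw [hα, sq, ← Complex.exp_add, ← Complex.exp_add, ← Complex.exp_zero]
      congr 1; push_cast; ring
    calc α^2 * c = α^2 * ((‖c‖ : ℂ) * Complex.exp ((c.arg : ℝ) * Complex.I)) := by
          rw [Complex.norm_mul_exp_arg_mul_I]
      _ = (α^2 * Complex.exp ((c.arg : ℝ) * Complex.I)) * (‖c‖ : ℂ) := by ring
      _ = (‖c‖ : ℂ) := by rw [key, one_mul]
  have h1 : ‖c‖ = (∑ j, ∑ k, A j k * w j * w k).re := by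
    rw [hFw, hval, Complex.ofReal_re]
  rw [sym_sum' n A hA.1 w, re_decomp' n (fun j k => (A j k).re) w] at h1
  have hwabs : ∀ j, ‖w j‖ = 1 := by
    intro j
    simp only [hw]
    rw [norm_mul, habs, hz j, one_mul]
  have hx : ∀ j, |(w j).re| ≤ 1 := by
    intro j
    calc |(w j).re| ≤ ‖w j‖ := Complex.abs_re_le_norm _
      _ = 1 := hwabs j
  have hy : 0 ≤ ∑ j, ∑ k, (A j k).re * (w j).im * (w k).im := psd_real' n A hA _
  have hcube : ∑ j, ∑ k, (A j k).re * (w j).re * (w k).re ≤ M :=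
    cube_max' n (fun j k => (A j k).re) (diag_re_nonneg' n A hA) M hM _ hx
  rw [h1]
  linarith

/-- Lemma 2.4 of Gupta–Ray.  For a positive semidefinite `n × n` complex
matrix `A`, the supremum of `|Σ_{j,k} a_{jk} z_j z_k|` over the torus equals the maximum of the
(nonnegative real) quantities `Σ_{j,k} a_{jk} s_j s_k` over sign vectors `s ∈ {−1,1}^n`. -/
theorem stmt2 (n : ℕ) (A : Matrix (Fin n) (Fin n) ℂ) (hA : A.PosSemidef) :
    sSup {r : ℝ | ∃ z : Fin n → ℂ, (∀ j, ‖z j‖ = 1) ∧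
        r = ‖∑ j, ∑ k, A j k * z j * z k‖} =
    sSup {r : ℝ | ∃ s : Fin n → ℝ, (∀ j, s j = 1 ∨ s j = -1) ∧
        (r : ℂ) = ∑ j, ∑ k, A j k * (s j : ℂ) * (s k : ℂ)} := by
  -- abbreviations
  have hQ : ∀ s : Fin n → ℝ, ((∑ j, ∑ k, (A j k).re * s j * s k : ℝ) : ℂ)
      = ∑ j, ∑ k, A j k * (s j : ℂ) * (s k : ℂ) := by
    intro s
    rw [sym_sum' n A hA.1]
    push_cast
    rfl
  set L := {r : ℝ | ∃ z : Fin n → ℂ, (∀ j, ‖z j‖ = 1) ∧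
      r = ‖∑ j, ∑ k, A j k * z j * z k‖} with hL
  set R := {r : ℝ | ∃ s : Fin n → ℝ, (∀ j, s j = 1 ∨ s j = -1) ∧
      (r : ℂ) = ∑ j, ∑ k, A j k * (s j : ℂ) * (s k : ℂ)} with hR
  -- every element of R has the form Q s
  have hRmem : ∀ r ∈ R, ∃ s : Fin n → ℝ, (∀ j, s j = 1 ∨ s j = -1) ∧
      r = ∑ j, ∑ k, (A j k).re * s j * s k := by
    rintro r ⟨s, hs, hr⟩
    refine ⟨s, hs, ?_⟩
    have : ((r : ℝ) : ℂ) = ((∑ j, ∑ k, (A j k).re * s j * s k : ℝ) : ℂ) := by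
      rw [hQ]; exact hr
    exact_mod_cast this
  -- R is finite, hence bddAbove
  have hsignfin : {s : Fin n → ℝ | ∀ j, s j = 1 ∨ s j = -1}.Finite := by
    apply Set.Finite.subset (Set.Finite.pi (fun _ : Fin n =>
      (Set.finite_singleton (1:ℝ)).insert (-1)))
    intro s hs j _
    rcases hs j with h | h
    · exact Or.inr (by simp [h])
    · exact Or.inl h
  have hRfin : R.Finite := by
    apply Set.Finite.subset (hsignfin.image (fun s => ∑ j, ∑ k, (A j k).re * s j * s k))
    intro r hr
    obtain ⟨s, hs, hr'⟩ := hRmem r hr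
    exact ⟨s, hs, hr'.symm⟩
  have hRbdd : BddAbove R := hRfin.bddAbove
  have hRne : R.Nonempty := by
    refine ⟨∑ j, ∑ k, (A j k).re * (1:ℝ) * (1:ℝ), fun _ => 1, fun _ => Or.inl rfl, ?_⟩
    exact hQ (fun _ => 1)
  -- sign bound
  have hM : ∀ s : Fin n → ℝ, (∀ j, s j = 1 ∨ s j = -1) →
      ∑ j, ∑ k, (A j k).re * s j * s k ≤ sSup R := by
    intro s hs
    exact le_csSup hRbdd ⟨s, hs, hQ s⟩
  -- every element of L is ≤ sSup R
  have hLle : ∀ r ∈ L, r ≤ sSup R := by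
    rintro r ⟨z, hz, rfl⟩
    exact torus_bound' n A hA (sSup R) hM z hz
  have hLne : L.Nonempty := ⟨_, fun _ => 1, fun _ => by simp, rfl⟩
  have hLbdd : BddAbove L := ⟨sSup R, hLle⟩
  apply le_antisymm
  · exact csSup_le hLne hLle
  · apply csSup_le hRne
    intro r hr
    apply le_csSup hLbdd
    obtain ⟨s, hs, hr'⟩ := hr
    have hrQ : r = ∑ j, ∑ k, (A j k).re * s j * s k := by
      have : ((r : ℝ) : ℂ) = ((∑ j, ∑ k, (A j k).re * s j * s k : ℝ) : ℂ) := by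
        rw [hQ]; exact hr'
      exact_mod_cast this
    refine ⟨fun j => (s j : ℂ), ?_, ?_⟩
    · intro j
      rcases hs j with h | h <;> simp [h]
    · rw [← hr', Complex.norm_real, Real.norm_eq_abs, abs_of_nonneg]
      rw [hrQ]
      exact psd_real' n A hA s
end

section
/- Let B = (b_{jk}) be a positive semidefinite n×n complex matrix and let (T_1,…,T_n) be a tuple of commuting contractions on a complex Hilbert space H. Then ‖Σ_{j,k=1}^n b_{jk} T_j T_k‖ ≤ sup{|Σ_{j,k=1}^n b_{jk} ⟨x_j, x_k⟩| : x_1,…,x_n ∈ H, ‖x_j‖ ≤ 1 for all j}. -/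
open scoped ComplexOrder

/-- from the proof of Theorem 2.7 in Gupta–Ray.  For a positive semidefinite
complex matrix `B` and a tuple of commuting contractions `T₁, …, T_n` on a complex Hilbert
space `H`, the norm of `Σ_{j,k} b_{jk} T_j T_k` is bounded by the supremum of
`|Σ_{j,k} b_{jk} ⟨x_j, x_k⟩|` over tuples of vectors of norm at most one in `H`. -/
theorem stmt3 (n : ℕ) (B : Matrix (Fin n) (Fin n) ℂ) (hB : B.PosSemidef)
    {H : Type*} [NormedAddCommGroup H] [InnerProductSpace ℂ H] [CompleteSpace H]
    (T : Fin n → H →L[ℂ] H) (hT : ∀ j, ‖T j‖ ≤ 1)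
    (hcomm : ∀ j k, (T j).comp (T k) = (T k).comp (T j)) :
    ‖∑ j, ∑ k, B j k • (T j).comp (T k)‖ ≤
      sSup {r : ℝ | ∃ x : Fin n → H, (∀ j, ‖x j‖ ≤ 1) ∧
        r = ‖∑ j, ∑ k, B j k * (inner ℂ (x j) (x k) : ℂ)‖} := by
  classical
  obtain ⟨C, hC⟩ := (by
    open scoped MatrixOrder Matrix.Norms.L2Operator in
    obtain ⟨C, hC⟩ := CStarAlgebra.nonneg_iff_eq_star_mul_self.mp hB.nonneg
    exact ⟨C, by rw [hC, Matrix.star_eq_conjTranspose]⟩ : ∃ C : Matrix (Fin n) (Fin n) ℂ, B = C.conjTranspose * C)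
  set A : H →L[ℂ] H := ∑ j, ∑ k, B j k • (T j).comp (T k) with hA
  set s : Set ℝ := {r : ℝ | ∃ x : Fin n → H, (∀ j, ‖x j‖ ≤ 1) ∧
        r = ‖∑ j, ∑ k, B j k * (inner ℂ (x j) (x k) : ℂ)‖} with hs
  set G : (Fin n → H) → (Fin n → H) → ℂ :=
    fun x y => ∑ j, ∑ k, B j k * (inner ℂ (x j) (y k) : ℂ) with hG
  -- realness / nonnegativity of the quadratic form
  have hBjk : ∀ j k, B j k = ∑ l, (starRingEnd ℂ) (C l j) * C l k := by
    intro j k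
    rw [hC]
    simp [Matrix.mul_apply, Matrix.conjTranspose_apply]
  have hinner : ∀ (x : Fin n → H) (l : Fin n),
      (inner ℂ (∑ j, C l j • x j) (∑ j, C l j • x j) : ℂ)
        = ∑ j, ∑ k, (starRingEnd ℂ) (C l j) * C l k * (inner ℂ (x j) (x k) : ℂ) := by
    intro x l
    simp only [sum_inner, inner_sum, inner_smul_left, inner_smul_right, Finset.mul_sum]
    rw [Finset.sum_comm]
    exact Finset.sum_congr rfl fun _ _ => Finset.sum_congr rfl fun _ _ => by ring
  have hGxx : ∀ x : Fin n → H,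
      G x x = ((∑ l, ‖∑ j, C l j • x j‖ ^ 2 : ℝ) : ℂ) := by
    intro x
    have h1 : G x x = ∑ l, (inner ℂ (∑ j, C l j • x j) (∑ j, C l j • x j) : ℂ) := by
      rw [hG]
      simp only [hinner, hBjk, Finset.sum_mul]
      calc ∑ j, ∑ k, ∑ l, (starRingEnd ℂ) (C l j) * C l k * (inner ℂ (x j) (x k) : ℂ)
          = ∑ j, ∑ l, ∑ k, (starRingEnd ℂ) (C l j) * C l k * (inner ℂ (x j) (x k) : ℂ) :=
            Finset.sum_congr rfl fun j _ => Finset.sum_comm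
        _ = ∑ l, ∑ j, ∑ k, (starRingEnd ℂ) (C l j) * C l k * (inner ℂ (x j) (x k) : ℂ) :=
            Finset.sum_comm
    rw [h1]
    push_cast
    refine Finset.sum_congr rfl fun l _ => ?_
    rw [inner_self_eq_norm_sq_to_K]
    norm_cast
  have hGre : ∀ x : Fin n → H, G x x = ((G x x).re : ℂ) := by
    intro x
    rw [hGxx x, Complex.ofReal_re]
  have hG0 : ∀ x : Fin n → H, 0 ≤ (G x x).re := by
    intro x
    have h2 : (G x x).re = ∑ l, ‖∑ j, C l j • x j‖ ^ 2 := by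
      rw [hGxx x, Complex.ofReal_re]
    rw [h2]
    positivity
  -- membership / sup bounds
  have hbdd : BddAbove s := by
    refine ⟨∑ j, ∑ k, ‖B j k‖, fun r hr => ?_⟩
    obtain ⟨x, hx, rfl⟩ := hr
    calc ‖∑ j, ∑ k, B j k * (inner ℂ (x j) (x k) : ℂ)‖
        ≤ ∑ j, ∑ k, ‖B j k * (inner ℂ (x j) (x k) : ℂ)‖ := by
          refine (norm_sum_le _ _).trans ?_
          exact Finset.sum_le_sum fun j _ => norm_sum_le _ _
      _ ≤ ∑ j, ∑ k, ‖B j k‖ := by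
          refine Finset.sum_le_sum fun j _ => Finset.sum_le_sum fun k _ => ?_
          rw [norm_mul]
          have h1 : ‖(inner ℂ (x j) (x k) : ℂ)‖ ≤ 1 := by
            calc ‖(inner ℂ (x j) (x k) : ℂ)‖ ≤ ‖x j‖ * ‖x k‖ :=
              norm_inner_le_norm _ _
            _ ≤ 1 * 1 := mul_le_mul (hx j) (hx k) (norm_nonneg _) zero_le_one
            _ = 1 := one_mul 1
          calc ‖B j k‖ * ‖(inner ℂ (x j) (x k) : ℂ)‖
              ≤ ‖B j k‖ * 1 :=
                mul_le_mul_of_nonneg_left h1 (norm_nonneg _)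
            _ = _ := mul_one _
  have hmem : ∀ x : Fin n → H, (∀ j, ‖x j‖ ≤ 1) → (G x x).re ≤ sSup s := by
    intro x hx
    refine le_csSup hbdd ⟨x, hx, ?_⟩
    show (G x x).re = ‖G x x‖
    rw [hGre x, Complex.ofReal_re, Complex.norm_real, Real.norm_eq_abs, abs_of_nonneg (hG0 x)]
  have hS0 : 0 ≤ sSup s := by
    have := hmem (fun _ => 0) (fun _ => by simp)
    exact le_trans (hG0 _) this
  -- the key inner-product bound
  have hkey : ∀ u v : H, ‖u‖ ≤ 1 → ‖v‖ ≤ 1 →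
      (inner ℂ v (A u) : ℂ).re ≤ sSup s := by
    intro u v hu hv
    set a : Fin n → H := fun j => T j u with ha
    set b : Fin n → H := fun j => ContinuousLinearMap.adjoint (T j) v with hb
    have hna : ∀ j, ‖a j‖ ≤ 1 := fun j =>
      le_trans ((T j).le_opNorm u) (by
        calc ‖T j‖ * ‖u‖ ≤ 1 * 1 := mul_le_mul (hT j) hu (norm_nonneg _) zero_le_one
          _ = 1 := one_mul 1)
    have hnb : ∀ j, ‖b j‖ ≤ 1 := fun j =>
      le_trans ((ContinuousLinearMap.adjoint (T j)).le_opNorm v) (by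
        rw [ContinuousLinearMap.adjoint.norm_map]
        calc ‖T j‖ * ‖v‖ ≤ 1 * 1 := mul_le_mul (hT j) hv (norm_nonneg _) zero_le_one
          _ = 1 := one_mul 1)
    set xp : Fin n → H := fun j => (2⁻¹ : ℂ) • (a j + b j) with hxp
    set xm : Fin n → H := fun j => (2⁻¹ : ℂ) • (a j - b j) with hxm
    have hnp : ∀ j, ‖xp j‖ ≤ 1 := by
      intro j
      rw [hxp]
      simp only [norm_smul]
      calc ‖(2⁻¹ : ℂ)‖ * ‖a j + b j‖ ≤ 2⁻¹ * (‖a j‖ + ‖b j‖) := by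
            rw [show ‖(2⁻¹ : ℂ)‖ = (2⁻¹ : ℝ) by simp]
            exact mul_le_mul_of_nonneg_left (norm_add_le _ _) (by norm_num)
        _ ≤ 2⁻¹ * (1 + 1) := by
            refine mul_le_mul_of_nonneg_left (add_le_add (hna j) (hnb j)) (by norm_num)
        _ = 1 := by norm_num
    have hnm : ∀ j, ‖xm j‖ ≤ 1 := by
      intro j
      rw [hxm]
      simp only [norm_smul]
      calc ‖(2⁻¹ : ℂ)‖ * ‖a j - b j‖ ≤ 2⁻¹ * (‖a j‖ + ‖b j‖) := by
            rw [show ‖(2⁻¹ : ℂ)‖ = (2⁻¹ : ℝ) by simp]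
            exact mul_le_mul_of_nonneg_left (norm_sub_le _ _) (by norm_num)
        _ ≤ 2⁻¹ * (1 + 1) := by
            refine mul_le_mul_of_nonneg_left (add_le_add (hna j) (hnb j)) (by norm_num)
        _ = 1 := by norm_num
    -- polarization identity
    have hpol : G xp xp - G xm xm = 2⁻¹ * (G a b + G b a) := by
      rw [hG]
      simp only [hxp, hxm, inner_smul_left, inner_smul_right, inner_add_left,
        inner_add_right, inner_sub_left, inner_sub_right, map_inv₀, Complex.conj_ofNat,
        ← Finset.sum_sub_distrib, ← Finset.sum_add_distrib, Finset.mul_sum]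
      refine Finset.sum_congr rfl fun j _ => Finset.sum_congr rfl fun k _ => ?_
      ring
    -- identify G b a and G a b
    have hAu : ∀ w : H, A w = ∑ j, ∑ k, B j k • (T j) ((T k) w) := by
      intro w
      rw [hA]
      simp [ContinuousLinearMap.sum_apply, ContinuousLinearMap.smul_apply,
        ContinuousLinearMap.comp_apply]
    have hGba : G b a = (inner ℂ v (A u) : ℂ) := by
      rw [hG, hAu]
      simp only [inner_sum, inner_smul_right]
      refine Finset.sum_congr rfl fun j _ => Finset.sum_congr rfl fun k _ => ?_
      rw [hb, ha]
      rw [ContinuousLinearMap.adjoint_inner_left]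
    have hherm : ∀ j k, (starRingEnd ℂ) (B j k) = B k j := by
      intro j k
      conv_rhs => rw [← hB.1]
      simp [Matrix.conjTranspose_apply]
    have hGab : G a b = (starRingEnd ℂ) (inner ℂ v (A u) : ℂ) := by
      rw [hG, hAu]
      simp only [inner_sum, inner_smul_right, map_sum, map_mul]
      rw [Finset.sum_comm]
      refine Finset.sum_congr rfl fun j _ => Finset.sum_congr rfl fun k _ => ?_
      rw [hherm j k, inner_conj_symm]
      congr 1
      simp only [ha, hb]
      exact ContinuousLinearMap.adjoint_inner_right (T j) (T k u) v
    have hre : G xp xp - G xm xm = (((inner ℂ v (A u) : ℂ)).re : ℂ) := by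
      rw [hpol, hGab, hGba, add_comm, Complex.add_conj]
      push_cast
      ring
    have : (inner ℂ v (A u) : ℂ).re = (G xp xp).re - (G xm xm).re := by
      have := congrArg Complex.re hre
      simpa using this.symm
    rw [this]
    calc (G xp xp).re - (G xm xm).re ≤ (G xp xp).re - 0 := by
          linarith [hG0 xm]
      _ = (G xp xp).re := by ring
      _ ≤ sSup s := hmem xp hnp
  -- conclude opNorm bound
  refine ContinuousLinearMap.opNorm_le_bound _ hS0 fun u => ?_
  rcases eq_or_ne u 0 with rfl | hu
  · simp [hS0]
  · have hnu : ‖u‖ ≠ 0 := norm_ne_zero_iff.mpr hu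
    set u' : H := ((‖u‖ : ℂ))⁻¹ • u with hu'
    have hnu' : ‖u'‖ = 1 := by
      rw [hu', norm_smul, norm_inv, Complex.norm_real, Real.norm_eq_abs,
        abs_of_nonneg (norm_nonneg u), inv_mul_cancel₀ hnu]
    have hAu' : ‖A u'‖ ≤ sSup s := by
      rcases eq_or_ne (A u') 0 with h0 | h0
      · rw [h0]; simpa using hS0
      · have hnAu' : ‖A u'‖ ≠ 0 := norm_ne_zero_iff.mpr h0
        set v : H := ((‖A u'‖ : ℂ))⁻¹ • A u' with hv
        have hnv : ‖v‖ ≤ 1 := by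
          rw [hv, norm_smul]
          simp only [norm_inv, Complex.norm_real, Real.norm_eq_abs,
            abs_of_nonneg (norm_nonneg (A u'))]
          rw [inv_mul_cancel₀ hnAu']
        have := hkey u' v (le_of_eq hnu') hnv
        have hinner : (inner ℂ v (A u') : ℂ) = (‖A u'‖ : ℂ) := by
          rw [hv, inner_smul_left, inner_self_eq_norm_sq_to_K]
          rw [map_inv₀, Complex.conj_ofReal]
          field_simp
          rfl
        rw [hinner] at this
        simpa using this
    have hscale : A u = ((‖u‖ : ℂ)) • A u' := by
      rw [hu', map_smul, smul_smul, mul_inv_cancel₀ (Complex.ofReal_ne_zero.mpr hnu), one_smul]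
    calc ‖A u‖ = ‖u‖ * ‖A u'‖ := by
          rw [hscale, norm_smul, Complex.norm_real, Real.norm_eq_abs,
            abs_of_nonneg (norm_nonneg u)]
      _ ≤ ‖u‖ * sSup s := mul_le_mul_of_nonneg_left hAu' (norm_nonneg u)
      _ = sSup s * ‖u‖ := mul_comm _ _
end

section
/- Let B = (b_{jk}) be a positive semidefinite n×n complex matrix and let H be a complex Hilbert space. Then sup{|Σ_{j,k=1}^n b_{jk} ⟨x_j, y_k⟩| : x_j, y_k ∈ H, ‖x_j‖ ≤ 1, ‖y_k‖ ≤ 1 for all j, k} = sup{|Σ_{j,k=1}^n b_{jk} ⟨x_j, x_k⟩| : x_j ∈ H, ‖x_j‖ ≤ 1 for all j}. -/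
open scoped ComplexOrder Matrix

lemma stmt4_key {n : ℕ} {B : Matrix (Fin n) (Fin n) ℂ} (hB : B.PosSemidef)
    {H : Type*} [NormedAddCommGroup H] [InnerProductSpace ℂ H]
    (u : Fin n → H) :
    ∃ t : ℝ, 0 ≤ t ∧ (∑ j, ∑ k, B j k * (inner ℂ (u j) (u k) : ℂ)) = (t : ℂ) := by
  obtain ⟨C, rfl⟩ : ∃ C : Matrix (Fin n) (Fin n) ℂ, B = Cᴴ * C := by
    open scoped MatrixOrder in
    exact CStarAlgebra.nonneg_iff_eq_star_mul_self.mp hB.nonneg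
  refine ⟨∑ l, ‖∑ j, C l j • u j‖^2, by positivity, ?_⟩
  have h1 : ∀ j k, (Cᴴ * C) j k = ∑ l, star (C l j) * C l k := by
    intro j k; simp [Matrix.mul_apply, Matrix.conjTranspose_apply]
  have swap : ∀ (f : Fin n → Fin n → Fin n → ℂ),
      ∑ j, ∑ k, ∑ l, f j k l = ∑ l, ∑ j, ∑ k, f j k l := by
    intro f
    rw [show (∑ j, ∑ k, ∑ l, f j k l) = ∑ j, ∑ l, ∑ k, f j k l from
      Finset.sum_congr rfl fun j _ => Finset.sum_comm, Finset.sum_comm]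
  calc ∑ j, ∑ k, (Cᴴ*C) j k * (inner ℂ (u j) (u k) : ℂ)
      = ∑ l, (inner ℂ (∑ j, C l j • u j) (∑ k, C l k • u k) : ℂ) := by
        simp_rw [h1, Finset.sum_mul]
        rw [swap]
        simp_rw [sum_inner, inner_sum, inner_smul_left, inner_smul_right]
        exact Finset.sum_congr rfl fun l _ => Finset.sum_congr rfl fun j _ =>
          Finset.sum_congr rfl fun k _ => by rw [starRingEnd_apply, mul_assoc]
    _ = ((∑ l, ‖∑ j, C l j • u j‖^2 : ℝ) : ℂ) := by
        push_cast
        simp [inner_self_eq_norm_sq_to_K]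


/-- from the proof of Theorem 2.7 in Gupta–Ray, following Arveson–Nagy.
For a positive semidefinite complex matrix `B` and a complex Hilbert space `H`, the supremum of
`|Σ_{j,k} b_{jk} ⟨x_j, y_k⟩|` over tuples `x_j, y_k` of vectors of norm at most one equals the
supremum of `|Σ_{j,k} b_{jk} ⟨x_j, x_k⟩|` over tuples `x_j` of vectors of norm at most one. -/
theorem stmt4 (n : ℕ) (B : Matrix (Fin n) (Fin n) ℂ) (hB : B.PosSemidef)
    (H : Type*) [NormedAddCommGroup H] [InnerProductSpace ℂ H] [CompleteSpace H] :
    sSup {r : ℝ | ∃ (x : Fin n → H) (y : Fin n → H),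
        (∀ j, ‖x j‖ ≤ 1) ∧ (∀ k, ‖y k‖ ≤ 1) ∧
        r = ‖∑ j, ∑ k, B j k * (inner ℂ (x j) (y k) : ℂ)‖} =
    sSup {r : ℝ | ∃ x : Fin n → H, (∀ j, ‖x j‖ ≤ 1) ∧
        r = ‖∑ j, ∑ k, B j k * (inner ℂ (x j) (x k) : ℂ)‖} := by
  set S1 : Set ℝ := {r : ℝ | ∃ (x : Fin n → H) (y : Fin n → H),
      (∀ j, ‖x j‖ ≤ 1) ∧ (∀ k, ‖y k‖ ≤ 1) ∧
      r = ‖∑ j, ∑ k, B j k * (inner ℂ (x j) (y k) : ℂ)‖} with hS1def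
  set S2 : Set ℝ := {r : ℝ | ∃ x : Fin n → H, (∀ j, ‖x j‖ ≤ 1) ∧
      r = ‖∑ j, ∑ k, B j k * (inner ℂ (x j) (x k) : ℂ)‖} with hS2def
  have habs : ∀ (x y : Fin n → H), (∀ j, ‖x j‖ ≤ 1) → (∀ k, ‖y k‖ ≤ 1) →
      ‖∑ j, ∑ k, B j k * (inner ℂ (x j) (y k) : ℂ)‖ ≤
        ∑ j, ∑ k, ‖B j k‖ := by
    intro x y hx hy
    refine le_trans (norm_sum_le _ _) (Finset.sum_le_sum fun j _ =>
      le_trans (norm_sum_le _ _) (Finset.sum_le_sum fun k _ => ?_))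
    rw [norm_mul]
    have h1 : ‖(inner ℂ (x j) (y k) : ℂ)‖ ≤ 1 := by
      exact le_trans (norm_inner_le_norm _ _)
        (mul_le_one₀ (hx j) (norm_nonneg _) (hy k))
    calc ‖B j k‖ * ‖(inner ℂ (x j) (y k) : ℂ)‖
        ≤ ‖B j k‖ * 1 :=
          mul_le_mul_of_nonneg_left h1 (norm_nonneg _)
      _ = _ := mul_one _
  have bdd1 : BddAbove S1 := by
    refine ⟨∑ j, ∑ k, ‖B j k‖, ?_⟩
    rintro r ⟨x, y, hx, hy, rfl⟩
    exact habs x y hx hy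
  have bdd2 : BddAbove S2 := by
    refine ⟨∑ j, ∑ k, ‖B j k‖, ?_⟩
    rintro r ⟨x, hx, rfl⟩
    exact habs x x hx hx
  have ne1 : S1.Nonempty := ⟨_, fun _ => 0, fun _ => 0, by simp, by simp, rfl⟩
  have ne2 : S2.Nonempty := ⟨_, fun _ => 0, by simp, rfl⟩
  have hsymm : ∀ x y : Fin n → H,
      (starRingEnd ℂ) (∑ j, ∑ k, B j k * (inner ℂ (x j) (y k) : ℂ)) =
        ∑ j, ∑ k, B j k * (inner ℂ (y j) (x k) : ℂ) := by
    intro x y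
    simp_rw [map_sum, map_mul, inner_conj_symm]
    rw [Finset.sum_comm]
    exact Finset.sum_congr rfl fun j _ => Finset.sum_congr rfl fun k _ => by
      rw [show (starRingEnd ℂ) (B k j) = B j k from hB.1.apply j k]
  refine le_antisymm (csSup_le ne1 ?_) (csSup_le_csSup bdd1 ne2 ?_)
  · rintro r ⟨x, y, hx, hy, rfl⟩
    obtain ⟨a, ha0, hax⟩ := stmt4_key hB x
    obtain ⟨b, hb0, hby⟩ := stmt4_key hB y
    have haS : a ≤ sSup S2 :=
      le_csSup bdd2 ⟨x, hx, by rw [hax, Complex.norm_of_nonneg ha0]⟩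
    have hbS : b ≤ sSup S2 :=
      le_csSup bdd2 ⟨y, hy, by rw [hby, Complex.norm_of_nonneg hb0]⟩
    set z : ℂ := ∑ j, ∑ k, B j k * (inner ℂ (x j) (y k) : ℂ) with hzdef
    by_cases hz : z = 0
    · rw [hz]; simpa using le_trans ha0 haS
    · set r0 : ℝ := ‖z‖ with hr0def
      have hr0 : (r0 : ℂ) ≠ 0 := by
        exact_mod_cast norm_ne_zero_iff.mpr hz
      set c : ℂ := z / (r0 : ℂ) with hc
      have hzz : (starRingEnd ℂ) z * z = (r0 : ℂ)^2 := by
        rw [mul_comm, Complex.mul_conj, Complex.normSq_eq_norm_sq, hr0def]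
        push_cast; ring
      have hcc : (starRingEnd ℂ) c * c = 1 := by
        calc (starRingEnd ℂ) c * c = ((starRingEnd ℂ) z * z) / ((r0:ℂ) * r0) := by
              rw [hc, map_div₀, Complex.conj_ofReal]; ring
          _ = 1 := by rw [hzz, sq, div_self (mul_ne_zero hr0 hr0)]
      have hcz : (starRingEnd ℂ) c * z = (r0 : ℂ) := by
        calc (starRingEnd ℂ) c * z = ((starRingEnd ℂ) z * z) / (r0:ℂ) := by
              rw [hc, map_div₀, Complex.conj_ofReal]; ring
          _ = (r0:ℂ) := by rw [hzz, sq, mul_div_assoc, div_self hr0, mul_one]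
      have hcz2 : c * (starRingEnd ℂ) z = (r0 : ℂ) := by
        simpa [map_mul, Complex.conj_ofReal, mul_comm] using
          congrArg (starRingEnd ℂ) hcz
      set u : Fin n → H := fun j => c • x j - y j with hu
      obtain ⟨t, ht0, htu⟩ := stmt4_key hB u
      have hterm : ∀ j k, B j k * (inner ℂ (u j) (u k) : ℂ) =
          ((starRingEnd ℂ) c * c) * (B j k * inner ℂ (x j) (x k)) -
            (starRingEnd ℂ) c * (B j k * inner ℂ (x j) (y k)) -
            c * (B j k * inner ℂ (y j) (x k)) + B j k * inner ℂ (y j) (y k) := by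
        intro j k
        simp only [hu, inner_sub_left, inner_sub_right, inner_smul_left,
          inner_smul_right]
        ring
      have hFu : (∑ j, ∑ k, B j k * (inner ℂ (u j) (u k) : ℂ)) =
          ((starRingEnd ℂ) c * c) * (∑ j, ∑ k, B j k * (inner ℂ (x j) (x k) : ℂ)) -
            (starRingEnd ℂ) c * z -
            c * (∑ j, ∑ k, B j k * (inner ℂ (y j) (x k) : ℂ)) +
            (∑ j, ∑ k, B j k * (inner ℂ (y j) (y k) : ℂ)) := by
        simp_rw [hterm, Finset.sum_add_distrib, Finset.sum_sub_distrib,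
          ← Finset.mul_sum]
        rfl
      have hcomplex : (t : ℂ) = ((a + b - 2 * r0 : ℝ) : ℂ) := by
        rw [← htu, hFu, hcc, one_mul, hax, hby, hcz, ← hsymm x y, ← hzdef, hcz2]
        push_cast; ring
      have hreal : t = a + b - 2 * r0 := by exact_mod_cast hcomplex
      show r0 ≤ sSup S2
      linarith
  · rintro r ⟨x, hx, rfl⟩
    exact ⟨x, x, hx, hx, rfl⟩
end

section
/- Let B = (b_{jk}) be a real positive semidefinite n×n matrix. Then sup{|Σ_{j,k=1}^n b_{jk} s_j t_k| : s, t ∈ [−1, 1]^n} = sup{Σ_{j,k=1}^n b_{jk} s_j s_k : s ∈ [−1, 1]^n} = max{Σ_{j,k=1}^n b_{jk} s_j s_k : s ∈ {−1, 1}^n}; that is, the ℓ^∞(n;ℝ) → ℓ^1(n;ℝ) operator norm of B equals the supremum of the quadratic form of B over {−1,1}^n. -/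
open Matrix

private lemma quadExpand' {n : ℕ} (B : Matrix (Fin n) (Fin n) ℝ) (i : Fin n) (v : Fin n → ℝ) :
    ∑ j, ∑ k, B j k * v j * v k
    = B i i * v i * v i + (∑ k ∈ Finset.univ.erase i, B i k * v i * v k)
      + ∑ j ∈ Finset.univ.erase i,
          (B j i * v j * v i + ∑ k ∈ Finset.univ.erase i, B j k * v j * v k) := by
  rw [← Finset.add_sum_erase _ _ (Finset.mem_univ i)]
  congr 1
  · rw [← Finset.add_sum_erase _ _ (Finset.mem_univ i)]
  · exact Finset.sum_congr rfl fun j hj => by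
      rw [← Finset.add_sum_erase _ _ (Finset.mem_univ i)]

private lemma quadUpdate' {n : ℕ} (B : Matrix (Fin n) (Fin n) ℝ)
    (hsym : ∀ j k, B j k = B k j) (s : Fin n → ℝ) (i : Fin n) (c : ℝ) :
    ∑ j, ∑ k, B j k * (Function.update s i c) j * (Function.update s i c) k
    = (∑ j, ∑ k, B j k * s j * s k)
      + 2 * (c - s i) * (∑ k, B i k * s k) + (c - s i) ^ 2 * B i i := by
  set u := Function.update s i c with hu
  have h1 : ∀ k ∈ Finset.univ.erase i, u k = s k := fun k hk =>
    Function.update_of_ne (Finset.ne_of_mem_erase hk) _ _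
  have h2 : u i = c := Function.update_self _ _ _
  rw [quadExpand' B i u, quadExpand' B i s]
  have hL : ∑ k, B i k * s k = B i i * s i + ∑ k ∈ Finset.univ.erase i, B i k * s k := by
    rw [← Finset.add_sum_erase _ _ (Finset.mem_univ i)]
  rw [hL]
  have e1 : ∑ k ∈ Finset.univ.erase i, B i k * u i * u k
      = c * ∑ k ∈ Finset.univ.erase i, B i k * s k := by
    rw [Finset.mul_sum]
    exact Finset.sum_congr rfl fun k hk => by rw [h2, h1 k hk]; ring
  have e2 : ∑ j ∈ Finset.univ.erase i, (B j i * u j * u i + ∑ k ∈ Finset.univ.erase i, B j k * u j * u k)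
      = c * (∑ k ∈ Finset.univ.erase i, B i k * s k)
        + ∑ j ∈ Finset.univ.erase i, ∑ k ∈ Finset.univ.erase i, B j k * s j * s k := by
    rw [Finset.sum_add_distrib, Finset.mul_sum]
    congr 1
    · exact Finset.sum_congr rfl fun j hj => by rw [h2, h1 j hj, hsym j i]; ring
    · exact Finset.sum_congr rfl fun j hj =>
        Finset.sum_congr rfl fun k hk => by rw [h1 j hj, h1 k hk]
  have e3 : ∑ k ∈ Finset.univ.erase i, B i k * s i * s k
      = s i * ∑ k ∈ Finset.univ.erase i, B i k * s k := by
    rw [Finset.mul_sum]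
    exact Finset.sum_congr rfl fun k hk => by ring
  have e4 : ∑ j ∈ Finset.univ.erase i, (B j i * s j * s i + ∑ k ∈ Finset.univ.erase i, B j k * s j * s k)
      = s i * (∑ k ∈ Finset.univ.erase i, B i k * s k)
        + ∑ j ∈ Finset.univ.erase i, ∑ k ∈ Finset.univ.erase i, B j k * s j * s k := by
    rw [Finset.sum_add_distrib, Finset.mul_sum]
    congr 1
    exact Finset.sum_congr rfl fun j hj => by rw [hsym j i]; ring
  rw [e1, e2, e3, e4, h2]
  ring

private lemma diagNN' {n : ℕ} {B : Matrix (Fin n) (Fin n) ℝ} (hB : B.PosSemidef) (i : Fin n) :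
    0 ≤ B i i := by
  have h := hB.dotProduct_mulVec_nonneg (Pi.single i 1)
  simpa [dotProduct, Matrix.mulVec, Pi.single_apply] using h

private lemma symB' {n : ℕ} {B : Matrix (Fin n) (Fin n) ℝ} (hB : B.PosSemidef) (j k : Fin n) :
    B j k = B k j := by
  have := hB.1.apply k j
  simpa using this

private lemma quadNN' {n : ℕ} {B : Matrix (Fin n) (Fin n) ℝ} (hB : B.PosSemidef)
    (s : Fin n → ℝ) : 0 ≤ ∑ j, ∑ k, B j k * s j * s k := by
  have h := hB.dotProduct_mulVec_nonneg s
  simp [dotProduct, Matrix.mulVec, Finset.mul_sum] at h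
  convert h using 2 with j
  · rfl
  exact Finset.sum_congr rfl fun k _ => by ring

private lemma vertexStep' {n : ℕ} {B : Matrix (Fin n) (Fin n) ℝ} (hB : B.PosSemidef)
    (s : Fin n → ℝ) (i : Fin n) (hsi : |s i| ≤ 1) :
    ∃ c : ℝ, (c = 1 ∨ c = -1) ∧
      (∑ j, ∑ k, B j k * s j * s k)
        ≤ ∑ j, ∑ k, B j k * (Function.update s i c) j * (Function.update s i c) k := by
  set L := ∑ k, B i k * s k with hL
  have ha : 0 ≤ B i i := diagNN' hB i
  have habs := abs_le.mp hsi
  rcases le_or_gt 0 L with hLpos | hLneg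
  · refine ⟨1, Or.inl rfl, ?_⟩
    rw [quadUpdate' B (symB' hB) s i 1]
    nlinarith [sq_nonneg (1 - s i)]
  · refine ⟨-1, Or.inr rfl, ?_⟩
    rw [quadUpdate' B (symB' hB) s i (-1)]
    nlinarith [sq_nonneg (-1 - s i)]

private lemma vertex' {n : ℕ} {B : Matrix (Fin n) (Fin n) ℝ} (hB : B.PosSemidef)
    (s : Fin n → ℝ) (hs : ∀ j, |s j| ≤ 1) :
    ∃ ε : Fin n → ℝ, (∀ j, ε j = 1 ∨ ε j = -1) ∧
      (∑ j, ∑ k, B j k * s j * s k) ≤ ∑ j, ∑ k, B j k * ε j * ε k := by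
  suffices h : ∀ F : Finset (Fin n), ∀ s : Fin n → ℝ, (∀ j, |s j| ≤ 1) →
      ∃ ε : Fin n → ℝ, (∀ j, |ε j| ≤ 1) ∧ (∀ j ∈ F, ε j = 1 ∨ ε j = -1) ∧
        (∑ j, ∑ k, B j k * s j * s k) ≤ ∑ j, ∑ k, B j k * ε j * ε k by
    obtain ⟨ε, _, h2, h3⟩ := h Finset.univ s hs
    exact ⟨ε, fun j => h2 j (Finset.mem_univ j), h3⟩
  intro F
  induction F using Finset.induction_on with
  | empty => exact fun s hs => ⟨s, hs, fun j hj => absurd hj (Finset.notMem_empty j), le_refl _⟩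
  | @insert i F hiF ih =>
    intro s hs
    obtain ⟨ε, hε1, hε2, hε3⟩ := ih s hs
    obtain ⟨c, hc, hle⟩ := vertexStep' hB ε i (hε1 i)
    refine ⟨Function.update ε i c, ?_, ?_, le_trans hε3 hle⟩
    · intro j
      rcases eq_or_ne j i with rfl | hne
      · rw [Function.update_self]
        rcases hc with rfl | rfl <;> norm_num
      · rw [Function.update_of_ne hne]; exact hε1 j
    · intro j hj
      rcases eq_or_ne j i with rfl | hne
      · rw [Function.update_self]; exact hc
      · rw [Function.update_of_ne hne]
        exact hε2 j (Finset.mem_of_mem_insert_of_ne hj hne)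

section
open scoped MatrixOrder

noncomputable def Matrix.PosSemidef.sqrt {n : ℕ} {B : Matrix (Fin n) (Fin n) ℝ}
    (_hB : B.PosSemidef) : Matrix (Fin n) (Fin n) ℝ := CFC.sqrt B

lemma Matrix.PosSemidef.posSemidef_sqrt {n : ℕ} {B : Matrix (Fin n) (Fin n) ℝ}
    (hB : B.PosSemidef) : hB.sqrt.PosSemidef := (CFC.sqrt_nonneg B).posSemidef

lemma Matrix.PosSemidef.sqrt_mul_self {n : ℕ} {B : Matrix (Fin n) (Fin n) ℝ}
    (hB : B.PosSemidef) : hB.sqrt * hB.sqrt = B := CFC.sqrt_mul_sqrt_self B hB.nonneg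

end

private lemma bilinear_eq' {n : ℕ} {B : Matrix (Fin n) (Fin n) ℝ} (hB : B.PosSemidef)
    (s t : Fin n → ℝ) :
    ∑ j, ∑ k, B j k * s j * t k = (hB.sqrt *ᵥ s) ⬝ᵥ (hB.sqrt *ᵥ t) := by
  have hsq : hB.sqrtᵀ = hB.sqrt := by
    rw [← Matrix.conjTranspose_eq_transpose_of_trivial]
    exact hB.posSemidef_sqrt.1
  have h1 : s ⬝ᵥ (B *ᵥ t) = (hB.sqrt *ᵥ s) ⬝ᵥ (hB.sqrt *ᵥ t) := by
    set C := hB.sqrt with hC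
    have hCC : C * C = B := hB.sqrt_mul_self
    rw [← hCC, ← Matrix.mulVec_mulVec, dotProduct_mulVec,
      ← Matrix.mulVec_transpose, hsq]
  rw [← h1]
  simp only [dotProduct, Matrix.mulVec, Finset.mul_sum]
  exact Finset.sum_congr rfl fun j _ => Finset.sum_congr rfl fun k _ => by ring

private lemma CSbound' {n : ℕ} {B : Matrix (Fin n) (Fin n) ℝ} (hB : B.PosSemidef)
    (s t : Fin n → ℝ) :
    |∑ j, ∑ k, B j k * s j * t k|
      ≤ max (∑ j, ∑ k, B j k * s j * s k) (∑ j, ∑ k, B j k * t j * t k) := by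
  have hs := bilinear_eq' hB s s
  have ht := bilinear_eq' hB t t
  have hst := bilinear_eq' hB s t
  set u := hB.sqrt *ᵥ s
  set v := hB.sqrt *ᵥ t
  have hcs : (u ⬝ᵥ v) ^ 2 ≤ (u ⬝ᵥ u) * (v ⬝ᵥ v) := by
    have := Finset.sum_mul_sq_le_sq_mul_sq Finset.univ u v
    simpa [dotProduct, pow_two] using this
  have hu : 0 ≤ u ⬝ᵥ u := Finset.sum_nonneg fun i _ => mul_self_nonneg _
  have hv : 0 ≤ v ⬝ᵥ v := Finset.sum_nonneg fun i _ => mul_self_nonneg _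
  rw [hst, hs, ht]
  set M := max (u ⬝ᵥ u) (v ⬝ᵥ v) with hM
  have hM0 : 0 ≤ M := le_trans hu (le_max_left _ _)
  have h1 : u ⬝ᵥ u ≤ M := le_max_left _ _
  have h2 : v ⬝ᵥ v ≤ M := le_max_right _ _
  have hsq : (u ⬝ᵥ v) ^ 2 ≤ M ^ 2 := le_trans hcs (by nlinarith)
  exact abs_le.mpr ⟨by nlinarith, by nlinarith⟩

/-- from the proof of Theorem 2.7 in Gupta–Ray.  For a real positive
semidefinite matrix `B`, the `ℓ^∞ → ℓ^1` norm `sup{|Σ b_{jk} s_j t_k| : s, t ∈ [−1,1]^n}`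
equals the supremum of the quadratic form `Σ b_{jk} s_j s_k` over `[−1,1]^n`, which in turn
equals its maximum over the sign vectors `{−1,1}^n`. -/
theorem stmt5 (n : ℕ) (B : Matrix (Fin n) (Fin n) ℝ) (hB : B.PosSemidef) :
    sSup {r : ℝ | ∃ s t : Fin n → ℝ, (∀ j, |s j| ≤ 1) ∧ (∀ k, |t k| ≤ 1) ∧
        r = |∑ j, ∑ k, B j k * s j * t k|} =
      sSup {r : ℝ | ∃ s : Fin n → ℝ, (∀ j, |s j| ≤ 1) ∧
        r = ∑ j, ∑ k, B j k * s j * s k} ∧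
    sSup {r : ℝ | ∃ s : Fin n → ℝ, (∀ j, |s j| ≤ 1) ∧
        r = ∑ j, ∑ k, B j k * s j * s k} =
      sSup {r : ℝ | ∃ s : Fin n → ℝ, (∀ j, s j = 1 ∨ s j = -1) ∧
        r = ∑ j, ∑ k, B j k * s j * s k} := by
  set S1 := {r : ℝ | ∃ s t : Fin n → ℝ, (∀ j, |s j| ≤ 1) ∧ (∀ k, |t k| ≤ 1) ∧
      r = |∑ j, ∑ k, B j k * s j * t k|} with hS1
  set S2 := {r : ℝ | ∃ s : Fin n → ℝ, (∀ j, |s j| ≤ 1) ∧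
      r = ∑ j, ∑ k, B j k * s j * s k} with hS2
  set S3 := {r : ℝ | ∃ s : Fin n → ℝ, (∀ j, s j = 1 ∨ s j = -1) ∧
      r = ∑ j, ∑ k, B j k * s j * s k} with hS3
  -- boundedness
  have hCbd : ∀ s t : Fin n → ℝ, (∀ j, |s j| ≤ 1) → (∀ k, |t k| ≤ 1) →
      |∑ j, ∑ k, B j k * s j * t k| ≤ ∑ j, ∑ k, |B j k| := by
    intro s t hs ht
    refine le_trans (Finset.abs_sum_le_sum_abs _ _) ?_
    refine Finset.sum_le_sum fun j _ => ?_
    refine le_trans (Finset.abs_sum_le_sum_abs _ _) ?_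
    refine Finset.sum_le_sum fun k _ => ?_
    rw [abs_mul, abs_mul]
    calc |B j k| * |s j| * |t k| ≤ |B j k| * 1 * 1 := by
          apply mul_le_mul (mul_le_mul le_rfl (hs j) (abs_nonneg _) (abs_nonneg _)) (ht k)
            (abs_nonneg _) (by positivity)
      _ = |B j k| := by ring
  have bdd1 : BddAbove S1 := by
    refine ⟨∑ j, ∑ k, |B j k|, ?_⟩
    rintro r ⟨s, t, hs, ht, rfl⟩
    exact hCbd s t hs ht
  have hsub21 : S2 ⊆ S1 := by
    rintro r ⟨s, hs, rfl⟩
    exact ⟨s, s, hs, hs, (abs_of_nonneg (quadNN' hB s)).symm⟩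
  have hsub32 : S3 ⊆ S2 := by
    rintro r ⟨s, hs, rfl⟩
    refine ⟨s, fun j => ?_, rfl⟩
    rcases hs j with h | h <;> rw [h] <;> norm_num
  have bdd2 : BddAbove S2 := bdd1.mono hsub21
  have bdd3 : BddAbove S3 := bdd2.mono hsub32
  have ne3 : S3.Nonempty :=
    ⟨∑ j, ∑ k, B j k * (1 : ℝ) * 1, fun _ => 1, fun j => Or.inl rfl, rfl⟩
  have ne2 : S2.Nonempty := ne3.mono hsub32
  have ne1 : S1.Nonempty := ne2.mono hsub21
  constructor
  · apply le_antisymm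
    · apply csSup_le ne1
      rintro r ⟨s, t, hs, ht, rfl⟩
      refine le_trans (CSbound' hB s t) (max_le ?_ ?_)
      · exact le_csSup bdd2 ⟨s, hs, rfl⟩
      · exact le_csSup bdd2 ⟨t, ht, rfl⟩
    · exact csSup_le_csSup bdd1 ne2 hsub21
  · apply le_antisymm
    · apply csSup_le ne2
      rintro r ⟨s, hs, rfl⟩
      obtain ⟨ε, hε, hle⟩ := vertex' hB s hs
      exact le_trans hle (le_csSup bdd3 ⟨ε, hε, rfl⟩)
    · exact csSup_le_csSup bdd2 ne3 hsub32
end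

section
/- For x_1, y_1, x_2, y_2 ∈ H = ℓ²(ℕ, ℂ), the Varopoulos operators T_{x_1, y_1} and T_{x_2, y_2} commute if and only if [x_1♯, y_2] = [x_2♯, y_1]. In particular, for any x_1, x_2 ∈ H the operators T_{x_1} and T_{x_2} commute. -/
noncomputable section

open scoped ComplexConjugate

/-- The Hilbert space `ℓ²(ℕ, ℂ)`. -/
abbrev H2 : Type := lp (fun _ : ℕ => ℂ) 2

/-- The pairing `[x♯, y] = Σᵢ xᵢ yᵢ` for `x, y ∈ ℓ²(ℕ, ℂ)`. -/
def sharpPair (x y : H2) : ℂ := ∑' i, x i * y i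

/-- The coordinatewise complex conjugate of an element of `ℓ²(ℕ, ℂ)`. -/
def conjH (x : H2) : H2 :=
  ⟨fun i => conj (x i), by
    show Memℓp (fun i => conj (x i)) 2
    have hx : Memℓp (fun i => x i) 2 := lp.memℓp x
    rw [memℓp_gen_iff (by norm_num)] at hx ⊢
    simpa using hx⟩

lemma conjH_apply (x : H2) (i : ℕ) : conjH x i = conj (x i) := rfl

lemma summable_sharp (x y : H2) : Summable fun i => x i * y i := by
  have h := lp.summable_inner (𝕜 := ℂ) (conjH x) y
  refine h.congr fun i => ?_
  simp [conjH_apply, RCLike.inner_apply, mul_comm]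

lemma sharpPair_eq_inner (x y : H2) : sharpPair x y = inner ℂ (conjH x) y := by
  rw [lp.inner_eq_tsum]
  refine tsum_congr fun i => ?_
  simp [conjH_apply, RCLike.inner_apply, sharpPair, mul_comm]

lemma norm_conjH (x : H2) : ‖conjH x‖ = ‖x‖ := by
  rw [lp.norm_eq_tsum_rpow (by norm_num) (conjH x), lp.norm_eq_tsum_rpow (by norm_num) x]
  congr 1
  refine tsum_congr fun i => ?_
  simp [conjH_apply]

lemma norm_sharpPair_le (x y : H2) : ‖sharpPair x y‖ ≤ ‖x‖ * ‖y‖ := by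
  rw [sharpPair_eq_inner]
  calc ‖(inner ℂ (conjH x) y : ℂ)‖ ≤ ‖conjH x‖ * ‖y‖ := norm_inner_le_norm (𝕜 := ℂ) (conjH x) y
    _ = ‖x‖ * ‖y‖ := by rw [norm_conjH]

/-- The Varopoulos operator `T_{x,y}` on `ℂ ⊕ ℓ² ⊕ ℂ`. -/
def VarOp (x y : H2) : (ℂ × H2 × ℂ) →L[ℂ] (ℂ × H2 × ℂ) :=
  LinearMap.mkContinuousOfExistsBound
    { toFun := fun p => (sharpPair x p.2.1, p.2.2 • y, 0)
      map_add' := by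
        intro p q
        have : sharpPair x (p.2.1 + q.2.1) = sharpPair x p.2.1 + sharpPair x q.2.1 := by
          unfold sharpPair
          rw [← Summable.tsum_add (summable_sharp x p.2.1) (summable_sharp x q.2.1)]
          refine tsum_congr fun i => ?_
          rw [lp.coeFn_add]
          ring_nf
          simp [mul_add]
        simp [Prod.ext_iff, this, add_smul]
      map_smul' := by
        intro c p
        have : sharpPair x (c • p.2.1) = c * sharpPair x p.2.1 := by
          unfold sharpPair
          rw [← tsum_mul_left]
          refine tsum_congr fun i => ?_
          rw [lp.coeFn_smul]
          simp
          ring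
        simp [Prod.ext_iff, this, smul_smul, mul_comm] }
    ⟨‖x‖ + ‖y‖, by
      intro p
      have hn1 : ‖p.2.1‖ ≤ ‖p‖ := (norm_fst_le p.2).trans (norm_snd_le p)
      have hn2 : ‖p.2.2‖ ≤ ‖p‖ := (norm_snd_le p.2).trans (norm_snd_le p)
      have h1 : ‖sharpPair x p.2.1‖ ≤ ‖x‖ * ‖p‖ :=
        (norm_sharpPair_le x p.2.1).trans
          (mul_le_mul_of_nonneg_left hn1 (norm_nonneg x))
      have h2 : ‖p.2.2 • y‖ ≤ ‖y‖ * ‖p‖ := by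
        rw [norm_smul]
        calc ‖p.2.2‖ * ‖y‖ ≤ ‖p‖ * ‖y‖ :=
              mul_le_mul_of_nonneg_right hn2 (norm_nonneg y)
          _ = ‖y‖ * ‖p‖ := mul_comm _ _
      have hpn : (0:ℝ) ≤ ‖p‖ := norm_nonneg p
      have hxn : (0:ℝ) ≤ ‖x‖ := norm_nonneg x
      have hyn : (0:ℝ) ≤ ‖y‖ := norm_nonneg y
      show ‖((sharpPair x p.2.1 : ℂ), ((p.2.2 • y : H2), (0:ℂ)))‖ ≤ (‖x‖ + ‖y‖) * ‖p‖
      rw [Prod.norm_def, Prod.norm_def, norm_zero]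
      refine max_le ?_ (max_le ?_ (by positivity))
      · nlinarith [mul_le_mul_of_nonneg_right hyn hpn]
      · nlinarith [mul_le_mul_of_nonneg_right hxn hpn]⟩

lemma VarOp_apply (x y : H2) (p : ℂ × H2 × ℂ) :
    VarOp x y p = (sharpPair x p.2.1, p.2.2 • y, 0) := rfl

lemma sharpPair_smul (x : H2) (c : ℂ) (y : H2) :
    sharpPair x (c • y) = c * sharpPair x y := by
  unfold sharpPair
  rw [← tsum_mul_left]
  refine tsum_congr fun i => ?_
  rw [lp.coeFn_smul]
  simp
  ring

/-- Gupta–Ray, Section 2.  Two Varopoulos operators `T_{x₁,y₁}` and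
`T_{x₂,y₂}` commute if and only if `[x₁♯, y₂] = [x₂♯, y₁]`; in particular the operators
`T_x = T_{x,x}` always commute pairwise. -/
theorem stmt6 :
    (∀ x₁ y₁ x₂ y₂ : H2,
      (VarOp x₁ y₁).comp (VarOp x₂ y₂) = (VarOp x₂ y₂).comp (VarOp x₁ y₁) ↔
        sharpPair x₁ y₂ = sharpPair x₂ y₁) ∧
    (∀ x₁ x₂ : H2,
      (VarOp x₁ x₁).comp (VarOp x₂ x₂) = (VarOp x₂ x₂).comp (VarOp x₁ x₁)) := by
  have key : ∀ x₁ y₁ x₂ y₂ : H2,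
      (VarOp x₁ y₁).comp (VarOp x₂ y₂) = (VarOp x₂ y₂).comp (VarOp x₁ y₁) ↔
        sharpPair x₁ y₂ = sharpPair x₂ y₁ := by
    intro x₁ y₁ x₂ y₂
    constructor
    · intro h
      have := DFunLike.congr_fun h ((0 : ℂ), (0 : H2), (1 : ℂ))
      simp only [ContinuousLinearMap.comp_apply, VarOp_apply, sharpPair_smul,
        one_smul, zero_smul, Prod.mk.injEq] at this
      simpa using this.1
    · intro h
      refine ContinuousLinearMap.ext fun p => ?_
      simp only [ContinuousLinearMap.comp_apply, VarOp_apply, sharpPair_smul, zero_smul]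
      rw [h]
  have comm : ∀ a b : H2, sharpPair a b = sharpPair b a := fun a b =>
    tsum_congr fun i => mul_comm _ _
  exact ⟨key, fun x₁ x₂ => (key x₁ x₁ x₂ x₂).mpr (comm x₁ x₂)⟩

end
end

section
/- For every real number c < π²/8 there exist n ∈ ℕ and a symmetric complex n×n matrix A = (a_{jk}) with sup{|Σ_{j,k=1}^n a_{jk} z_j z_k| : z ∈ ℂ^n, |z_j| = 1 for all j} ≤ 1 and ‖A‖_{∞→1} > c. Equivalently, lim_{n→∞} ‖𝒜_n‖ ≥ π²/8, where 𝒜_n is the linear map sending a symmetric homogeneous degree-two polynomial p_A (with the supremum norm over the polydisc) to its coefficient matrix A (with the norm ‖·‖_{∞→1}). -/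
open Real intervalIntegral

private lemma abs_cos_periodic' : Function.Periodic (fun x : ℝ => |Real.cos x|) π := by
  intro x; simp [Real.cos_add_pi]

private lemma integral_abs_cos_period' (a : ℝ) : ∫ x in a..(a + π), |Real.cos x| = 2 := by
  rw [abs_cos_periodic'.intervalIntegral_add_eq a (-(π/2))]
  have h1 : -(π/2) + π = π/2 := by ring
  rw [h1]
  have h2 : ∀ x ∈ Set.uIcc (-(π/2)) (π/2), |Real.cos x| = Real.cos x := by
    intro x hx
    rw [Set.uIcc_of_le (by linarith [Real.pi_pos] : -(π/2) ≤ π/2)] at hx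
    exact abs_of_nonneg (Real.cos_nonneg_of_mem_Icc hx)
  rw [intervalIntegral.integral_congr h2, integral_cos]
  rw [Real.sin_pi_div_two, Real.sin_neg, Real.sin_pi_div_two]; norm_num

/-- Key lemma: for any shift `r`, `∑_{j<n} |cos (π j / n + r)| ≤ 1 / sin (π/(2n))`. -/
private lemma key_sum' (n : ℕ) (hn : 1 ≤ n) (r : ℝ) :
    ∑ j ∈ Finset.range n, |Real.cos (π * j / n + r)| ≤ 1 / Real.sin (π / (2 * n)) := by
  have hnR : (0:ℝ) < n := by exact_mod_cast hn
  have hn1R : (1:ℝ) ≤ n := by exact_mod_cast hn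
  have hn0 : (n:ℝ) ≠ 0 := ne_of_gt hnR
  set h : ℝ := π / (2 * n) with hh
  have hpos : 0 < h := by positivity
  have hlt : h < π := by
    rw [hh, div_lt_iff₀ (by positivity)]
    nlinarith [Real.pi_pos, hn1R]
  have hs : 0 < Real.sin h := Real.sin_pos_of_pos_of_lt_pi hpos hlt
  set y : ℕ → ℝ := fun j => r - h + π * j / n with hy
  have hy1 : ∀ j : ℕ, y (j+1) = (π * j / n + r) + h := by
    intro j; simp only [hy]; push_cast; rw [hh]; field_simp; ring
  have hy0 : ∀ j : ℕ, y j = (π * j / n + r) - h := by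
    intro j; simp only [hy]; ring
  have hterm : ∀ j : ℕ, |Real.cos (π * j / n + r)|
      = |Real.sin (y (j+1)) - Real.sin (y j)| / (2 * Real.sin h) := by
    intro j
    set x := π * j / n + r
    have : Real.sin (y (j+1)) - Real.sin (y j) = 2 * Real.cos x * Real.sin h := by
      rw [hy1 j, hy0 j, Real.sin_add, Real.sin_sub]; ring
    rw [this, abs_mul, abs_mul]
    rw [abs_of_pos hs, abs_of_pos (by norm_num : (0:ℝ) < 2)]
    field_simp
  calc ∑ j ∈ Finset.range n, |Real.cos (π * j / n + r)|
      = (∑ j ∈ Finset.range n, |Real.sin (y (j+1)) - Real.sin (y j)|) / (2 * Real.sin h) := by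
        rw [Finset.sum_div]; exact Finset.sum_congr rfl fun j _ => hterm j
    _ ≤ 2 / (2 * Real.sin h) := by
        have hmono : ∀ j : ℕ, y j ≤ y (j+1) := by
          intro j
          rw [hy0, hy1]
          have : (0:ℝ) < h := hpos
          linarith
        have hintg : ∀ k : ℕ, k < n → IntervalIntegrable (fun x => |Real.cos x|)
            MeasureTheory.volume (y k) (y (k+1)) :=
          fun k _ => (Real.continuous_cos.abs).intervalIntegrable _ _
        have hsum : ∑ j ∈ Finset.range n, ∫ x in y j..y (j+1), |Real.cos x|
            = ∫ x in (y 0)..(y n), |Real.cos x| :=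
          intervalIntegral.sum_integral_adjacent_intervals hintg
        have hyn : y n = y 0 + π := by
          simp only [hy]; push_cast; field_simp; ring
        have htot : ∫ x in (y 0)..(y n), |Real.cos x| = 2 := by
          rw [hyn]; exact integral_abs_cos_period' _
        have hle : ∀ j ∈ Finset.range n, |Real.sin (y (j+1)) - Real.sin (y j)|
            ≤ ∫ x in y j..y (j+1), |Real.cos x| := by
          intro j _
          rw [← integral_cos]
          exact intervalIntegral.abs_integral_le_integral_abs (hmono j)
        have := Finset.sum_le_sum hle
        rw [hsum, htot] at this
        exact div_le_div_of_nonneg_right this (by positivity)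
    _ = 1 / Real.sin h := by field_simp

private lemma abs_exp_add_exp' (x y : ℝ) :
    ‖Complex.exp (x * Complex.I) + Complex.exp (y * Complex.I)‖
      = 2 * |Real.cos ((x - y)/2)| := by
  have h1 : Complex.exp ((x:ℂ) * Complex.I) + Complex.exp ((y:ℂ) * Complex.I)
      = Complex.exp ((((x+y)/2 : ℝ) : ℂ) * Complex.I) *
        (Complex.exp ((((x-y)/2 : ℝ) : ℂ) * Complex.I)
          + Complex.exp (((-((x-y)/2) : ℝ) : ℂ) * Complex.I)) := by
    rw [mul_add, ← Complex.exp_add, ← Complex.exp_add]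
    push_cast; ring_nf
  rw [h1, norm_mul, Complex.norm_exp_ofReal_mul_I, one_mul]
  have h2 : Complex.exp ((((x-y)/2 : ℝ) : ℂ) * Complex.I)
      + Complex.exp (((-((x-y)/2) : ℝ) : ℂ) * Complex.I)
      = ((2 * Real.cos ((x-y)/2) : ℝ) : ℂ) := by
    have h3 : (((-((x-y)/2) : ℝ)) : ℂ) = -((((x-y)/2 : ℝ)) : ℂ) := by push_cast; ring
    rw [h3, Complex.exp_mul_I, Complex.exp_mul_I, Complex.cos_neg, Complex.sin_neg]
    push_cast
    ring
  rw [h2, Complex.norm_real, Real.norm_eq_abs, abs_mul]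
  norm_num

set_option maxHeartbeats 2000000 in
/-- Theorem 2.9 of Gupta–Ray, `lim_n ‖𝒜_n‖ ≥ π²/8`.  For every `c < π²/8`
there exist `n` and a symmetric complex `n × n` matrix `A` whose associated homogeneous
degree-two polynomial has supremum norm at most `1` on the torus, while
`‖A‖_{∞→1} = sup{|Σ_{j,k} a_{jk} v_j w_k| : |v_j| ≤ 1, |w_k| ≤ 1} > c`. -/
theorem stmt11 (c : ℝ) (hc : c < Real.pi ^ 2 / 8) :
    ∃ (n : ℕ) (A : Matrix (Fin n) (Fin n) ℂ), A.IsSymm ∧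
      sSup {r : ℝ | ∃ z : Fin n → ℂ, (∀ j, ‖z j‖ = 1) ∧
        r = ‖∑ j, ∑ k, A j k * z j * z k‖} ≤ 1 ∧
      c < sSup {r : ℝ | ∃ v w : Fin n → ℂ,
        (∀ j, ‖v j‖ ≤ 1) ∧ (∀ k, ‖w k‖ ≤ 1) ∧
        r = ‖∑ j, ∑ k, A j k * v j * w k‖} := by
  have hpi3 := Real.pi_gt_three
  have hpi4 := Real.pi_le_four
  have hpi0 := Real.pi_pos
  have hd : 0 < π^2/8 - c := by rw [Real.pi] at *; linarith [hc]
  obtain ⟨n, hn⟩ := exists_nat_gt (max 2 (π^4/(64*(π^2/8 - c))))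
  have hn2R : (2:ℝ) < n := lt_of_le_of_lt (le_max_left _ _) hn
  have hn2 : 2 ≤ n := by exact_mod_cast hn2R.le
  have hn1 : 1 ≤ n := le_trans (by norm_num) hn2
  have hnR : (0:ℝ) < n := by linarith
  have hn0 : (n:ℝ) ≠ 0 := ne_of_gt hnR
  have hnB : π^4/(64*(π^2/8 - c)) < n := lt_of_le_of_lt (le_max_right _ _) hn
  set s : ℝ := Real.sin (π/(2*n)) with hsdef
  have hx0 : 0 < π/(2*n) := by positivity
  have hxpi : π/(2*n) < π := by
    rw [div_lt_iff₀ (by positivity)]; nlinarith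
  have hs0 : 0 < s := Real.sin_pos_of_pos_of_lt_pi hx0 hxpi
  have hs1 : s ≤ 1 := Real.sin_le_one _
  -- the matrix
  set A : Matrix (Fin n) (Fin n) ℂ :=
    fun j k => ((s^2 * Real.cos (π*j.val/n - π*k.val/n) : ℝ) : ℂ) with hA
  -- exponential vectors
  set E : Fin n → ℂ := fun j => Complex.exp (((π*j.val/n : ℝ) : ℂ) * Complex.I) with hE
  set F : Fin n → ℂ := fun j => Complex.exp (((-(π*j.val/n) : ℝ) : ℂ) * Complex.I) with hF
  have hEabs : ∀ j, ‖E j‖ = 1 := fun j => Complex.norm_exp_ofReal_mul_I _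
  have hFabs : ∀ j, ‖F j‖ = 1 := fun j => Complex.norm_exp_ofReal_mul_I _
  have hEF : ∀ j, E j * F j = 1 := by
    intro j
    rw [hE, hF, ← Complex.exp_add, ← Complex.exp_zero]
    congr 1
    push_cast
    ring
  have hcos : ∀ j k : Fin n, ((Real.cos (π*j.val/n - π*k.val/n) : ℝ) : ℂ)
      = (E j * F k + F j * E k) / 2 := by
    intro j k
    have e1 : E j * F k = Complex.exp (((π*j.val/n - π*k.val/n : ℝ) : ℂ) * Complex.I) := by
      rw [hE, hF, ← Complex.exp_add]; congr 1; push_cast; ring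
    have e2 : F j * E k = Complex.exp (((-(π*j.val/n - π*k.val/n) : ℝ) : ℂ) * Complex.I) := by
      rw [hE, hF, ← Complex.exp_add]; congr 1; push_cast; ring
    rw [e1, e2]
    set θ : ℝ := π*j.val/n - π*k.val/n
    have h3 : ((-θ : ℝ) : ℂ) = -((θ : ℝ) : ℂ) := by push_cast; ring
    rw [h3, Complex.exp_mul_I, Complex.exp_mul_I, Complex.cos_neg, Complex.sin_neg,
      ← Complex.ofReal_cos]
    ring
  have hident : ∀ z : Fin n → ℂ,
      (∑ j, ∑ k, ((Real.cos (π*j.val/n - π*k.val/n) : ℝ) : ℂ) * z j * z k)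
        = (∑ j, E j * z j) * (∑ k, F k * z k) := by
    intro z
    have step1 : (∑ j, ∑ k, ((Real.cos (π*j.val/n - π*k.val/n) : ℝ) : ℂ) * z j * z k)
        = ∑ j, ∑ k, ((E j * z j) * (F k * z k) + (F j * z j) * (E k * z k)) / 2 := by
      refine Finset.sum_congr rfl fun j _ => Finset.sum_congr rfl fun k _ => ?_
      rw [hcos j k]; ring
    rw [step1]
    have step2 : (∑ j, E j * z j) * (∑ k, F k * z k)
        = ∑ j, ∑ k, (E j * z j) * (F k * z k) := Finset.sum_mul_sum _ _ _ _
    have step3 : (∑ j, F j * z j) * (∑ k, E k * z k)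
        = ∑ j, ∑ k, (F j * z j) * (E k * z k) := Finset.sum_mul_sum _ _ _ _
    have step4 : (∑ j, ∑ k, ((E j * z j) * (F k * z k) + (F j * z j) * (E k * z k)) / 2)
        = ((∑ j, ∑ k, (E j * z j) * (F k * z k))
            + ∑ j, ∑ k, (F j * z j) * (E k * z k)) / 2 := by
      rw [eq_div_iff (two_ne_zero : (2:ℂ) ≠ 0), Finset.sum_mul, ← Finset.sum_add_distrib]
      refine Finset.sum_congr rfl fun j _ => ?_
      rw [Finset.sum_mul, ← Finset.sum_add_distrib]
      refine Finset.sum_congr rfl fun k _ => ?_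
      field_simp
    rw [step4, ← step2, ← step3]
    ring
  refine ⟨n, A, ?_, ?_, ?_⟩
  · -- symmetry
    ext j k
    rw [Matrix.transpose_apply, hA]
    have : π*k.val/n - π*j.val/n = -(π*j.val/n - π*k.val/n) := by ring
    simp only [this, Real.cos_neg]
  · -- sup of polynomial ≤ 1
    apply Real.sSup_le _ (by norm_num)
    rintro r ⟨z, hz, rfl⟩
    have hAz : (∑ j, ∑ k, A j k * z j * z k)
        = ((s^2 : ℝ) : ℂ) * ((∑ j, E j * z j) * (∑ k, F k * z k)) := by
      rw [← hident z]
      rw [Finset.mul_sum]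
      refine Finset.sum_congr rfl fun j _ => ?_
      rw [Finset.mul_sum]
      refine Finset.sum_congr rfl fun k _ => ?_
      rw [hA]
      push_cast
      ring
    set L1 : ℂ := ∑ j, E j * z j with hL1
    set L2 : ℂ := ∑ k, F k * z k with hL2
    rw [hAz, norm_mul, norm_mul, Complex.norm_real, Real.norm_eq_abs, abs_of_nonneg (by positivity : (0:ℝ) ≤ s^2)]
    -- bound |L1| + |L2|
    have hsumbound : ‖L1‖ + ‖L2‖ ≤ 2 / s := by
      set a1 : ℝ := Complex.arg L1 with ha1
      set a2 : ℝ := Complex.arg L2 with ha2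
      set u : ℂ := Complex.exp (((-a1 : ℝ) : ℂ) * Complex.I) with hu
      set v : ℂ := Complex.exp (((-a2 : ℝ) : ℂ) * Complex.I) with hv
      have hcancel : ∀ a : ℝ, Complex.exp ((a:ℂ) * Complex.I)
          * Complex.exp (((-a : ℝ):ℂ) * Complex.I) = 1 := by
        intro a; rw [← Complex.exp_add, ← Complex.exp_zero]; congr 1; push_cast; ring
      have e1 : L1 * u = ((‖L1‖ : ℝ) : ℂ) := by
        conv_lhs => rw [← Complex.norm_mul_exp_arg_mul_I L1]
        rw [hu, mul_assoc, ← ha1, hcancel a1, mul_one]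
      have e2 : L2 * v = ((‖L2‖ : ℝ) : ℂ) := by
        conv_lhs => rw [← Complex.norm_mul_exp_arg_mul_I L2]
        rw [hv, mul_assoc, ← ha2, hcancel a2, mul_one]
      have e3 : ((‖L1‖ + ‖L2‖ : ℝ) : ℂ)
          = ∑ j, (E j * u + F j * v) * z j := by
        push_cast
        rw [← e1, ← e2, hL1, hL2, Finset.sum_mul, Finset.sum_mul, ← Finset.sum_add_distrib]
        refine Finset.sum_congr rfl fun j _ => ?_
        ring
      have e4 : ‖L1‖ + ‖L2‖
          = ‖∑ j, (E j * u + F j * v) * z j‖ := by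
        rw [← e3, Complex.norm_real, Real.norm_eq_abs, abs_of_nonneg (by positivity)]
      rw [e4]
      calc ‖∑ j, (E j * u + F j * v) * z j‖
          ≤ ∑ j, ‖(E j * u + F j * v) * z j‖ := norm_sum_le _ _
        _ = ∑ j : Fin n, 2 * |Real.cos (π * j.val / n + (a2 - a1)/2)| := by
            refine Finset.sum_congr rfl fun j _ => ?_
            rw [norm_mul, hz j, mul_one]
            have g1 : E j * u = Complex.exp (((π * j.val / n - a1 : ℝ) : ℂ) * Complex.I) := by
              rw [hE, hu, ← Complex.exp_add]; congr 1; push_cast; ring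
            have g2 : F j * v
                = Complex.exp (((-(π * j.val / n) - a2 : ℝ) : ℂ) * Complex.I) := by
              rw [hF, hv, ← Complex.exp_add]; congr 1; push_cast; ring
            rw [g1, g2, abs_exp_add_exp']
            have : ((π * j.val / n - a1) - ((-(π * j.val / n)) - a2))/2
                = π * j.val / n + (a2 - a1)/2 := by ring
            rw [this]
        _ = 2 * ∑ j ∈ Finset.range n, |Real.cos (π * j / n + (a2 - a1)/2)| := by
            rw [← Fin.sum_univ_eq_sum_range (fun m => |Real.cos (π * m / n + (a2 - a1)/2)|) n,
              Finset.mul_sum]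
        _ ≤ 2 * (1 / s) := by
            have := key_sum' n hn1 ((a2 - a1)/2)
            rw [hsdef]
            linarith
        _ = 2 / s := by ring
    have habs1 : (0:ℝ) ≤ ‖L1‖ := norm_nonneg _
    have habs2 : (0:ℝ) ≤ ‖L2‖ := norm_nonneg _
    have h1 : s * (‖L1‖ + ‖L2‖) ≤ 2 := by
      have := mul_le_mul_of_nonneg_left hsumbound hs0.le
      calc s * (‖L1‖ + ‖L2‖) ≤ s * (2/s) := this
        _ = 2 := by field_simp
    have h2 : (s * (‖L1‖ + ‖L2‖))^2 ≤ 4 := by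
      nlinarith [mul_nonneg hs0.le (by positivity : (0:ℝ) ≤ ‖L1‖ + ‖L2‖)]
    nlinarith [h2, sq_nonneg (s * ‖L1‖ - s * ‖L2‖)]
  · -- the bilinear form is large
    have hG : (∑ j, (E j)^2) = 0 := by
      set ζ : ℂ := Complex.exp (((2*π/n : ℝ) : ℂ) * Complex.I) with hz
      have hsq : ∀ j : Fin n, (E j)^2 = ζ ^ (j.val) := by
        intro j
        rw [hE, hz, ← Complex.exp_nat_mul, ← Complex.exp_nat_mul]
        congr 1
        push_cast
        field_simp
      have hnC : (n:ℂ) ≠ 0 := Nat.cast_ne_zero.mpr (by omega)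
      have hzn : ζ ^ n = 1 := by
        rw [hz, ← Complex.exp_nat_mul, ← Complex.exp_two_pi_mul_I]
        congr 1
        push_cast
        field_simp
      have hz1 : ζ ≠ 1 := by
        intro h
        rw [hz, Complex.exp_eq_one_iff] at h
        obtain ⟨k, hk⟩ := h
        have hk' : (((2*π/n : ℝ)) : ℂ) * Complex.I = (((k : ℝ)*(2*π) : ℝ) : ℂ) * Complex.I := by
          rw [hk]; push_cast; ring
        have hre : (2*π/n : ℝ) = (k : ℝ)*(2*π) :=
          Complex.ofReal_inj.mp (mul_right_cancel₀ Complex.I_ne_zero hk')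
        have h2pin : (0:ℝ) < 2*π/n := by positivity
        have hk0 : (0:ℤ) < k := by
          by_contra hneg
          push_neg at hneg
          have : (k:ℝ) ≤ 0 := by exact_mod_cast hneg
          nlinarith
        have hk1 : (1:ℝ) ≤ (k:ℝ) := by exact_mod_cast hk0
        have h6 : (k:ℝ)*(2*π)*n = 2*π := by
          rw [← hre]; field_simp
        nlinarith
      have hsum : (∑ j, (E j)^2) = ∑ j ∈ Finset.range n, ζ^j := by
        rw [← Fin.sum_univ_eq_sum_range (fun m => ζ^m) n]
        exact Finset.sum_congr rfl fun j _ => hsq j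
      rw [hsum, geom_sum_eq hz1, hzn]
      simp
    have hval : (∑ j, ∑ k, A j k * E j * F k) = ((s^2 * n^2 / 2 : ℝ) : ℂ) := by
      have hterm : ∀ j k : Fin n, A j k * E j * F k
          = ((s^2 : ℝ):ℂ)/2 * ((E j)^2 * (F k)^2) + ((s^2 : ℝ):ℂ)/2 := by
        intro j k
        have hAjk : A j k = ((s^2 : ℝ):ℂ)
            * ((Real.cos (π*j.val/n - π*k.val/n) : ℝ):ℂ) := by
          rw [hA]; push_cast; ring
        rw [hAjk, hcos j k]
        have h3 : ((s^2 : ℝ):ℂ) * ((E j * F k + F j * E k)/2) * E j * F k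
            = ((s^2 : ℝ):ℂ)/2 * ((E j)^2*(F k)^2)
              + ((s^2 : ℝ):ℂ)/2 * ((E j * F j)*(E k * F k)) := by ring
        rw [h3, hEF j, hEF k]
        ring
      have hsplit : (∑ j, ∑ k, A j k * E j * F k)
          = (∑ j, ∑ k, ((s^2 : ℝ):ℂ)/2 * ((E j)^2 * (F k)^2))
            + ∑ j : Fin n, ∑ k : Fin n, ((s^2 : ℝ):ℂ)/2 := by
        rw [← Finset.sum_add_distrib]
        refine Finset.sum_congr rfl fun j _ => ?_
        rw [← Finset.sum_add_distrib]
        exact Finset.sum_congr rfl fun k _ => hterm j k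
      have hzero : (∑ j, ∑ k, ((s^2 : ℝ):ℂ)/2 * ((E j)^2 * (F k)^2)) = 0 := by
        rw [Finset.sum_comm]
        have inner0 : ∀ k : Fin n, (∑ j, ((s^2 : ℝ):ℂ)/2 * ((E j)^2 * (F k)^2)) = 0 := by
          intro k
          have e5 : (∑ j, ((s^2 : ℝ):ℂ)/2 * ((E j)^2 * (F k)^2))
              = (∑ j, (E j)^2) * (((s^2 : ℝ):ℂ)/2 * (F k)^2) := by
            rw [Finset.sum_mul]
            exact Finset.sum_congr rfl fun j _ => by ring
          rw [e5, hG, zero_mul]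
        rw [Finset.sum_congr rfl fun k _ => inner0 k]
        simp
      have hconst : (∑ j : Fin n, ∑ k : Fin n, ((s^2 : ℝ):ℂ)/2)
          = (n:ℂ)^2 * (((s^2 : ℝ):ℂ)/2) := by
        simp [Finset.sum_const, Finset.card_univ]
        ring
      rw [hsplit, hzero, hconst, zero_add]
      push_cast
      ring
    have hmem : (s^2 * n^2 / 2 : ℝ) ∈ {r : ℝ | ∃ v w : Fin n → ℂ,
        (∀ j, ‖v j‖ ≤ 1) ∧ (∀ k, ‖w k‖ ≤ 1) ∧
        r = ‖∑ j, ∑ k, A j k * v j * w k‖} := by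
      refine ⟨E, F, fun j => le_of_eq (hEabs j), fun k => le_of_eq (hFabs k), ?_⟩
      rw [hval, Complex.norm_real, Real.norm_eq_abs, abs_of_nonneg (by positivity)]
    have hbdd : BddAbove {r : ℝ | ∃ v w : Fin n → ℂ,
        (∀ j, ‖v j‖ ≤ 1) ∧ (∀ k, ‖w k‖ ≤ 1) ∧
        r = ‖∑ j, ∑ k, A j k * v j * w k‖} := by
      refine ⟨(n:ℝ)^2, ?_⟩
      rintro r ⟨v, w, hv, hw, rfl⟩
      calc ‖∑ j, ∑ k, A j k * v j * w k‖
          ≤ ∑ j, ‖∑ k, A j k * v j * w k‖ := norm_sum_le _ _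
        _ ≤ ∑ j : Fin n, ∑ k : Fin n, ‖A j k * v j * w k‖ :=
            Finset.sum_le_sum fun j _ => norm_sum_le _ _
        _ ≤ ∑ j : Fin n, ∑ k : Fin n, (1:ℝ) := by
            refine Finset.sum_le_sum fun j _ => Finset.sum_le_sum fun k _ => ?_
            rw [norm_mul, norm_mul]
            have h1 : ‖A j k‖ ≤ 1 := by
              have hAjk : A j k = ((s^2 * Real.cos (π*j.val/n - π*k.val/n) : ℝ) : ℂ) := by
                rw [hA]
              rw [hAjk, Complex.norm_real, Real.norm_eq_abs, abs_mul]
              have hc1 := Real.abs_cos_le_one (π*j.val/n - π*k.val/n)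
              have hss : |s^2| ≤ 1 := by rw [abs_of_nonneg (by positivity)]; nlinarith
              nlinarith [abs_nonneg (Real.cos (π*j.val/n - π*k.val/n)), abs_nonneg (s^2)]
            have h2 := mul_le_one₀ (mul_le_one₀ h1 (norm_nonneg _) (hv j))
              (norm_nonneg _) (hw k)
            exact h2
        _ = (n:ℝ)^2 := by simp [Finset.sum_const, Finset.card_univ]; ring
    have hcr0 : c < s^2 * n^2 / 2 := by
      have hx1 : π/(2*n) ≤ 1 := by
        rw [div_le_one (by positivity)]
        nlinarith
      have hcube : π/(2*n) - (π/(2*n))^3/4 < Real.sin (π/(2*n)) := by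
        have := Real.sin_gt_sub_cube hx0; nlinarith [pow_pos hx0 3]
      have hid : (n:ℝ) * (π/(2*n) - (π/(2*n))^3/4) = π/2 - π^3/(32*(n:ℝ)^2) := by
        field_simp
        ring
      have h6 : π/2 - π^3/(32*(n:ℝ)^2) < n * s := by
        have h6a := mul_lt_mul_of_pos_left hcube hnR
        rw [hid] at h6a
        exact h6a
      have hnsq : (4:ℝ) ≤ (n:ℝ)^2 := by nlinarith
      have h7 : 0 < π/2 - π^3/(32*(n:ℝ)^2) := by
        have h7a : π^3/(32*(n:ℝ)^2) ≤ 64/128 :=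
          div_le_div₀ (by norm_num) (by nlinarith) (by norm_num) (by nlinarith)
        nlinarith
      have h8 : (π/2 - π^3/(32*(n:ℝ)^2))^2 < ((n:ℝ)*s)^2 := by
        apply pow_lt_pow_left₀ h6 h7.le (by norm_num)
      have h9 : π^2/4 - π^4/(32*(n:ℝ)^2) ≤ (π/2 - π^3/(32*(n:ℝ)^2))^2 := by
        have e : (π/2 - π^3/(32*(n:ℝ)^2))^2
            = π^2/4 - π^4/(32*(n:ℝ)^2) + (π^3/(32*(n:ℝ)^2))^2 := by
          field_simp
          ring
        rw [e]
        nlinarith [sq_nonneg (π^3/(32*(n:ℝ)^2))]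
      have h10 : π^4/(64*(n:ℝ)^2) ≤ π^4/(64*(n:ℝ)) :=
        div_le_div₀ (by positivity) (le_refl _) (by positivity) (by nlinarith)
      have h11 : π^4/(64*(n:ℝ)) < π^2/8 - c := by
        rw [div_lt_iff₀ (by positivity)]
        have hnB' : π^4 < (n:ℝ) * (64*(π^2/8 - c)) := (div_lt_iff₀ (by positivity)).mp hnB
        nlinarith
      have h12 : π^2/4 - π^4/(32*(n:ℝ)^2) < ((n:ℝ)*s)^2 := lt_of_le_of_lt h9 h8
      have h13 : π^2/8 - π^4/(64*(n:ℝ)^2) < s^2*(n:ℝ)^2/2 := by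
        have e2 : π^2/8 - π^4/(64*(n:ℝ)^2) = (π^2/4 - π^4/(32*(n:ℝ)^2))/2 := by
          field_simp
          ring
        have e3 : ((n:ℝ)*s)^2 = s^2*(n:ℝ)^2 := by ring
        rw [e2, ← e3]
        linarith
      linarith [h13, h10, h11]
    exact lt_of_lt_of_le hcr0 (le_csSup hbdd hmem)
end

section
/- For the Varopoulos–Kaijser polynomial p(z₁, z₂, z₃) = z₁² + z₂² + z₃² − 2z₁z₂ − 2z₂z₃ − 2z₃z₁, one has ‖p‖_{𝔻³,∞} = 5; that is, sup{|z₁² + z₂² + z₃² − 2z₁z₂ − 2z₂z₃ − 2z₃z₁| : z₁, z₂, z₃ ∈ ℂ, |z₁| = |z₂| = |z₃| = 1} = 5. -/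
open Complex

lemma key (w₁ w₂ : ℂ) (h1 : ‖w₁‖ = 1) (h2 : ‖w₂‖ = 1) :
    ‖(w₁ - w₂)^2 - 2*(w₁+w₂) + 1‖ ≤ 5 := by
  obtain ⟨u, hu⟩ := IsAlgClosed.exists_pow_nat_eq (w₁ * w₂) zero_lt_two
  have hu1 : ‖u‖ = 1 := by
    have h : ‖u‖ ^ 2 = 1 := by rw [← norm_pow, hu, norm_mul, h1, h2]; ring
    nlinarith [norm_nonneg u]
  have hune : u ≠ 0 := by intro h; rw [h] at hu1; simp at hu1
  set d := w₁ / u with hd_def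
  have hd : ‖d‖ = 1 := by rw [hd_def, norm_div, h1, hu1]; norm_num
  have hw1 : w₁ = d * u := by rw [hd_def, div_mul_cancel₀ w₁ hune]
  have hdd : d * (starRingEnd ℂ) d = 1 := by
    rw [Complex.mul_conj]; norm_cast
    rw [Complex.normSq_eq_norm_sq, hd]; norm_num
  have huu : u * (starRingEnd ℂ) u = 1 := by
    rw [Complex.mul_conj]; norm_cast
    rw [Complex.normSq_eq_norm_sq, hu1]; norm_num
  have hw1ne : w₁ ≠ 0 := by intro h; rw [h] at h1; simp at h1
  have hw2 : w₂ = (starRingEnd ℂ) d * u := by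
    have h3 : w₂ * w₁ = u ^ 2 := by rw [hu]; ring
    have : (starRingEnd ℂ) d * u * w₁ = u ^ 2 := by
      rw [hw1]
      calc (starRingEnd ℂ) d * u * (d * u) = (d * (starRingEnd ℂ) d) * u^2 := by ring
      _ = u ^ 2 := by rw [hdd]; ring
    exact mul_right_cancel₀ hw1ne (by rw [h3, this])
  -- c = d.re, plus conj formulas
  set c : ℝ := d.re with hc_def
  have hsum : d + (starRingEnd ℂ) d = 2 * (c : ℂ) := by
    rw [Complex.add_conj]; norm_num; exact hc_def.symm
  have hdiffsq : (d - (starRingEnd ℂ) d)^2 = 4 * (c:ℂ)^2 - 4 := by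
    have : (d - (starRingEnd ℂ) d)^2 = (d + (starRingEnd ℂ) d)^2 - 4 * (d * (starRingEnd ℂ) d) := by ring
    rw [this, hsum, hdd]; ring
  -- rewrite q
  have hq : (w₁ - w₂)^2 - 2*(w₁+w₂) + 1
      = (4 * (c:ℂ)^2 - 4) * u^2 - 4 * (c:ℂ) * u + 1 := by
    rw [hw1, hw2]
    calc (d*u - (starRingEnd ℂ) d * u)^2 - 2*(d*u + (starRingEnd ℂ) d*u) + 1
        = (d - (starRingEnd ℂ) d)^2 * u^2 - 2*(d + (starRingEnd ℂ) d)*u + 1 := by ring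
      _ = (4 * (c:ℂ)^2 - 4) * u^2 - 4 * (c:ℂ) * u + 1 := by rw [hdiffsq, hsum]; ring
  -- multiply by conj u ^ 2
  set v : ℂ := (starRingEnd ℂ) u with hv_def
  have hv1 : ‖v‖ = 1 := by rw [hv_def, Complex.norm_conj, hu1]
  have hmul : ((w₁ - w₂)^2 - 2*(w₁+w₂) + 1) * v^2 = (v - 2*(c:ℂ))^2 - 4 := by
    rw [hq]
    have huv : u * v = 1 := huu
    calc ((4 * (c:ℂ)^2 - 4) * u^2 - 4 * (c:ℂ) * u + 1) * v^2
        = (4 * (c:ℂ)^2 - 4) * (u*v)^2 - 4 * (c:ℂ) * (u*v) * v + v^2 := by ring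
      _ = (v - 2*(c:ℂ))^2 - 4 := by rw [huv]; ring
  have habs : ‖(w₁ - w₂)^2 - 2*(w₁+w₂) + 1‖
      = ‖(v - 2*(c:ℂ))^2 - 4‖ := by
    rw [← hmul, norm_mul, norm_pow, hv1]; ring
  rw [habs]
  -- now compute via normSq
  have hfac : (v - 2*(c:ℂ))^2 - 4 = (v - 2*(c:ℂ) - 2) * (v - 2*(c:ℂ) + 2) := by ring
  rw [hfac, norm_mul]
  have hvsq : v.re^2 + v.im^2 = 1 := by
    have := Complex.sq_norm v
    rw [hv1, Complex.normSq_apply] at this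
    nlinarith [this]
  have hc2 : c^2 ≤ 1 := by
    have := Complex.sq_norm d
    rw [hd, Complex.normSq_apply] at this
    nlinarith [sq_nonneg d.im]
  have e1 : ‖v - 2*(c:ℂ) - 2‖ = Real.sqrt ((v.re - 2*c - 2)^2 + v.im^2) := by
    rw [Complex.norm_def, Complex.normSq_apply]
    congr 1 <;> simp <;> ring
  have e2 : ‖v - 2*(c:ℂ) + 2‖ = Real.sqrt ((v.re - 2*c + 2)^2 + v.im^2) := by
    rw [Complex.norm_def, Complex.normSq_apply]
    congr 1 <;> simp <;> ring
  rw [e1, e2, ← Real.sqrt_mul (by positivity)]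
  have h5 : (5:ℝ) = Real.sqrt 25 := by
    rw [show (25:ℝ) = 5^2 by norm_num, Real.sqrt_sq] <;> norm_num
  rw [h5]
  apply Real.sqrt_le_sqrt
  nlinarith [sq_nonneg (c - v.re), sq_nonneg (c + v.re), sq_nonneg (c*v.re - 1),
    sq_nonneg (c*v.re + 1), sq_nonneg v.im,
    mul_nonneg (sq_nonneg (c - v.re)) (sq_nonneg (c + v.re)),
    sq_nonneg (c^2 - v.re^2), sq_nonneg ((c - v.re)*(c*v.re - 1)),
    sq_nonneg ((c + v.re)*(c*v.re + 1))]


/-- Gupta–Ray, Section 3.  The Varopoulos–Kaijser polynomial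
`p(z₁,z₂,z₃) = z₁² + z₂² + z₃² − 2z₁z₂ − 2z₂z₃ − 2z₃z₁` has supremum norm `5` on the
closed tridisc (equivalently, on the torus). -/
theorem stmt13 :
    sSup {r : ℝ | ∃ z₁ z₂ z₃ : ℂ,
        ‖z₁‖ = 1 ∧ ‖z₂‖ = 1 ∧ ‖z₃‖ = 1 ∧
        r = ‖z₁ ^ 2 + z₂ ^ 2 + z₃ ^ 2
            - 2 * z₁ * z₂ - 2 * z₂ * z₃ - 2 * z₃ * z₁‖} = 5 := by
  have hg : IsGreatest {r : ℝ | ∃ z₁ z₂ z₃ : ℂ,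
      ‖z₁‖ = 1 ∧ ‖z₂‖ = 1 ∧ ‖z₃‖ = 1 ∧
      r = ‖z₁ ^ 2 + z₂ ^ 2 + z₃ ^ 2
          - 2 * z₁ * z₂ - 2 * z₂ * z₃ - 2 * z₃ * z₁‖} 5 := by
    constructor
    · refine ⟨1, 1, -1, by simp, by simp, by simp, ?_⟩
      norm_num
    · rintro r ⟨z₁, z₂, z₃, h1, h2, h3, rfl⟩
      have h3ne : z₃ ≠ 0 := by intro h; rw [h] at h3; simp at h3
      have hfac : z₁ ^ 2 + z₂ ^ 2 + z₃ ^ 2 - 2 * z₁ * z₂ - 2 * z₂ * z₃ - 2 * z₃ * z₁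
          = z₃ ^ 2 * ((z₁/z₃ - z₂/z₃)^2 - 2*(z₁/z₃ + z₂/z₃) + 1) := by
        field_simp
        ring
      rw [hfac, norm_mul, norm_pow, h3, one_pow, one_mul]
      exact key (z₁/z₃) (z₂/z₃) (by rw [norm_div, h1, h3]; norm_num)
        (by rw [norm_div, h2, h3]; norm_num)
  exact hg.csSup_eq
end

section
/- Let A be the 3×3 matrix with all diagonal entries 1 and all off-diagonal entries −1 (the Varopoulos–Kaijser coefficient matrix). Then there exist unit vectors x₁, x₂, x₃ ∈ ℝ² (with the Euclidean inner product) such that Σ_{j,k=1}^3 a_{jk} ⟨x_j, x_k⟩ = 6, while sup{|Σ_{j,k=1}^3 a_{jk} z_j z_k| : |z_j| = 1 for all j} = 5; hence the ratio equals 6/5 = 1.2, giving C_2(𝛿₃) ≥ 1.2. -/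
set_option maxHeartbeats 1600000 in
/-- The key real inequality behind `‖p_A‖_{𝔻³,∞} = 5`. -/
lemma stmt15_aux1 (x y u v : ℝ) (h1 : x^2+y^2=1) (h2 : u^2+v^2=1) :
    ((x-u)^2-(y-v)^2-2*(x+u)+1)^2 + (2*(x-u)*(y-v)-2*(y+v))^2 ≤ 25 := by
  have hx : (0:ℝ) ≤ 1 - x^2 := by nlinarith [sq_nonneg y]
  have hu : (0:ℝ) ≤ 1 - u^2 := by nlinarith [sq_nonneg v]
  have hN : (0:ℝ) ≤ 12 - 4*x - 4*u + 4*x*u + 8*x*u^2 + 8*x^2*u - 8*x^2*u^2 := by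
    nlinarith [mul_nonneg hx hu, mul_nonneg hx (sq_nonneg (1-u)), mul_nonneg hx (sq_nonneg (1+u)),
      mul_nonneg hu (sq_nonneg (1-x)), mul_nonneg hu (sq_nonneg (1+x)),
      sq_nonneg (x-u), sq_nonneg (x+u), sq_nonneg (1-x*u), sq_nonneg (x+u+1), sq_nonneg (x+u-1)]
  have hG : 16*(1-2*x-2*u+2*x*u)^2*(1-x^2)*(1-u^2)
      ≤ (12 - 4*x - 4*u + 4*x*u + 8*x*u^2 + 8*x^2*u - 8*x^2*u^2)^2 := by
    nlinarith [mul_nonneg hx hu, mul_nonneg (mul_nonneg hx hu) (sq_nonneg (x-u)),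
      mul_nonneg (mul_nonneg hx hu) (sq_nonneg (x+u)),
      mul_nonneg (mul_nonneg hx hu) (sq_nonneg (1-x*u)),
      mul_nonneg (mul_nonneg hx hx) (sq_nonneg (1-u)), mul_nonneg (mul_nonneg hu hu) (sq_nonneg (1-x)),
      sq_nonneg ((1-x)*(1-u)), sq_nonneg ((1+x)*(1+u)),
      mul_nonneg hx (sq_nonneg (1-u)), mul_nonneg hu (sq_nonneg (1-x))]
  have e1 : 1 - x^2 = y^2 := by linarith
  have e2 : 1 - u^2 = v^2 := by linarith
  rw [e1, e2] at hG
  have key : 4*((1-2*x-2*u+2*x*u)*(y*v))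
      ≤ 12 - 4*x - 4*u + 4*x*u + 8*x*u^2 + 8*x^2*u - 8*x^2*u^2 := by
    nlinarith [hN, hG]
  have idp : ((x-u)^2-(y-v)^2-2*(x+u)+1)^2 + (2*(x-u)*(y-v)-2*(y+v))^2
      = 25 - (12 - 4*x - 4*u + 4*x*u + 8*x*u^2 + 8*x^2*u - 8*x^2*u^2)
        + 4*((1-2*x-2*u+2*x*u)*(y*v)) := by
    linear_combination (3 + 6*v^2 + 12*u + 2*u^2 - 4*y*v + y^2 - 4*x - 4*x*u + x^2) * h1
      + (9 + v^2 - 4*u + u^2 - 4*y*v + 12*x - 4*x*u - 4*x^2) * h2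
  rw [idp]; linarith

/-- The two-variable complex form of the inequality. -/
lemma stmt15_aux2 (a b : ℂ) (ha : ‖a‖ = 1) (hb : ‖b‖ = 1) :
    ‖a*a + b*b + 1 - 2*(a*b) - 2*a - 2*b‖ ≤ 5 := by
  have h1 : a.re^2 + a.im^2 = 1 := by
    have := Complex.sq_norm a
    rw [ha, Complex.normSq_apply] at this
    nlinarith [this]
  have h2 : b.re^2 + b.im^2 = 1 := by
    have := Complex.sq_norm b
    rw [hb, Complex.normSq_apply] at this
    nlinarith [this]
  have key := stmt15_aux1 a.re a.im b.re b.im h1 h2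
  have hsq : (‖a*a + b*b + 1 - 2*(a*b) - 2*a - 2*b‖)^2 ≤ 25 := by
    rw [Complex.sq_norm, Complex.normSq_apply]
    simp only [Complex.sub_re, Complex.sub_im, Complex.add_re, Complex.add_im,
      Complex.mul_re, Complex.mul_im, Complex.one_re, Complex.one_im,
      Complex.re_ofNat, Complex.im_ofNat]
    nlinarith [key]
  nlinarith [norm_nonneg (a*a + b*b + 1 - 2*(a*b) - 2*a - 2*b), hsq]

/-- Upper bound on the torus for the Varopoulos–Kaijser polynomial. -/
lemma stmt15_aux3 (z : Fin 3 → ℂ) (hz : ∀ j, ‖z j‖ = 1) :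
    ‖∑ j, ∑ k, (if j = k then (1:ℂ) else -1) * z j * z k‖ ≤ 5 := by
  have hc : z 2 * (starRingEnd ℂ) (z 2) = 1 := by
    rw [Complex.mul_conj]
    norm_cast
    rw [← Complex.sq_norm, hz 2]; norm_num
  have habsc : ‖(starRingEnd ℂ) (z 2)‖ = 1 := by
    rw [Complex.norm_conj]; exact hz 2
  set w := (starRingEnd ℂ) (z 2) with hw
  set a := z 0 * w with hadef
  set b := z 1 * w with hbdef
  have ha : ‖a‖ = 1 := by rw [hadef, norm_mul, hz 0, habsc]; ring
  have hb : ‖b‖ = 1 := by rw [hbdef, norm_mul, hz 1, habsc]; ring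
  have key := stmt15_aux2 a b ha hb
  have hfact : (∑ j, ∑ k, (if j = k then (1:ℂ) else -1) * z j * z k) * (w * w)
      = a*a + b*b + 1 - 2*(a*b) - 2*a - 2*b := by
    simp only [Fin.sum_univ_three]
    norm_num [Fin.ext_iff]
    rw [hadef, hbdef]
    linear_combination (z 2 * w + 1 - 2 * z 0 * w - 2 * z 1 * w) * hc
  calc ‖∑ j, ∑ k, (if j = k then (1:ℂ) else -1) * z j * z k‖
      = ‖(∑ j, ∑ k, (if j = k then (1:ℂ) else -1) * z j * z k) * (w * w)‖ := by
        rw [norm_mul, norm_mul, habsc]; ring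
    _ ≤ 5 := by rw [hfact]; exact key

/-- lower bound of Theorem 3.4 of Gupta–Ray, `C₂(𝛿₃) ≥ 1.2`.  For the
Varopoulos–Kaijser coefficient matrix (diagonal entries `1`, off-diagonal entries `−1`) there
are unit vectors `x₁, x₂, x₃ ∈ ℝ²` with `Σ_{j,k} a_{jk} ⟨x_j, x_k⟩ = 6`, while the supremum
of `|Σ_{j,k} a_{jk} z_j z_k|` over the torus is `5`; the ratio is `6/5 = 1.2`. -/
theorem stmt15 :
    (∃ x : Fin 3 → EuclideanSpace ℝ (Fin 2), (∀ j, ‖x j‖ = 1) ∧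
      ∑ j, ∑ k, (if j = k then (1:ℝ) else -1) * (inner ℝ (x j) (x k) : ℝ) = 6) ∧
    sSup {r : ℝ | ∃ z : Fin 3 → ℂ, (∀ j, ‖z j‖ = 1) ∧
      r = ‖∑ j, ∑ k, (if j = k then (1:ℂ) else -1) * z j * z k‖} = 5 := by
  constructor
  · have h3 : Real.sqrt 3 * Real.sqrt 3 = 3 := Real.mul_self_sqrt (by norm_num)
    refine ⟨fun j => (WithLp.equiv 2 (Fin 2 → ℝ)).symm
      (![![1, 0], ![-(1/2), Real.sqrt 3/2], ![-(1/2), -(Real.sqrt 3/2)]] j), ?_, ?_⟩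
    · intro j
      fin_cases j <;>
      · rw [EuclideanSpace.norm_eq, Real.sqrt_eq_one]
        simp only [Fin.sum_univ_two, WithLp.equiv_symm_apply, PiLp.toLp_apply, WithLp.ofLp_toLp, Matrix.cons_val_zero,
          Matrix.cons_val_one, Matrix.head_cons, Real.norm_eq_abs, sq_abs, Fin.zero_eta,
          Fin.mk_one, Matrix.cons_val_two, Matrix.tail_cons,
          show (⟨2, by norm_num⟩ : Fin 3) = 2 from rfl]
        nlinarith [h3]
    · simp only [Fin.sum_univ_three, PiLp.inner_apply, RCLike.inner_apply, starRingEnd_apply,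
        WithLp.equiv_symm_apply, PiLp.toLp_apply, WithLp.ofLp_toLp, Fin.sum_univ_two, Matrix.cons_val_zero, Matrix.cons_val_one,
        Matrix.head_cons, Matrix.cons_val_two, Matrix.tail_cons]
      norm_num [Fin.ext_iff]
      nlinarith [h3]
  · apply IsGreatest.csSup_eq
    constructor
    · refine ⟨![1, 1, -1], ?_, ?_⟩
      · intro j; fin_cases j <;> simp
      · have : (∑ j, ∑ k, (if j = k then (1:ℂ) else -1) * (![1, 1, -1] : Fin 3 → ℂ) j *
            (![1, 1, -1] : Fin 3 → ℂ) k) = 5 := by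
          simp only [Fin.sum_univ_three]
          norm_num [Fin.ext_iff, Matrix.cons_val_two, Matrix.tail_cons, Matrix.head_cons]
        rw [this]
        norm_num
    · rintro r ⟨z, hz, rfl⟩
      exact stmt15_aux3 z hz
end

section
/- For the symmetric matrix A = [[1,1,1],[1,1,1],[1,1,−1]], the associated homogeneous degree-two polynomial satisfies sup{|Σ_{j,k=1}^3 a_{jk} z_j z_k| : z ∈ ℂ³, |z_j| = 1 for all j} = 5√2. -/
open Complex

lemma ub_aux (a b : ℂ) (ha : ‖a‖ = 1) (hb : ‖b‖ = 1) :
    ‖(1 + a + b)^2 - 2‖ ≤ 5 * Real.sqrt 2 := by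
  set u : ℝ := (a + b).re with hu
  set v : ℝ := (a + b).im with hv
  have hsum : u^2 + v^2 ≤ 4 := by
    have h1 : ‖a + b‖ ≤ 2 := by
      calc ‖a + b‖ ≤ ‖a‖ + ‖b‖ := norm_add_le a b
        _ = 2 := by rw [ha, hb]; norm_num
    have h2 : Complex.normSq (a + b) ≤ 4 := by
      have := Complex.sq_norm (a + b)
      nlinarith [norm_nonneg (a + b)]
    simpa [Complex.normSq_apply, sq, hu, hv] using h2
  have hns : Complex.normSq ((1 + a + b)^2 - 2) ≤ 50 := by
    have hre : ((1 + a + b)^2 - 2).re = (1 + u)^2 - v^2 - 2 := by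
      simp [pow_two, Complex.mul_re, hu, hv]
      ring
    have him : ((1 + a + b)^2 - 2).im = 2 * (1 + u) * v := by
      simp [pow_two, Complex.mul_im, hu, hv]
      ring
    rw [Complex.normSq_apply, hre, him]
    nlinarith [sq_nonneg (2*u - 3), sq_nonneg (u + 2), sq_nonneg v,
      mul_nonneg (by nlinarith : (0:ℝ) ≤ 4 - (u^2+v^2)) (by nlinarith [sq_nonneg (u+2)] : (0:ℝ) ≤ 10 + 4*u + u^2 + v^2)]
  have h50 : Real.sqrt 50 = 5 * Real.sqrt 2 := by
    rw [show (50:ℝ) = 5^2 * 2 by norm_num, Real.sqrt_mul (by positivity), Real.sqrt_sq (by norm_num)]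
  calc ‖(1 + a + b)^2 - 2‖ = Real.sqrt (Complex.normSq ((1 + a + b)^2 - 2)) := Complex.norm_def _
    _ ≤ Real.sqrt 50 := Real.sqrt_le_sqrt hns
    _ = 5 * Real.sqrt 2 := h50

open Complex

lemma stmt16_ub (z : Fin 3 → ℂ) (h : ∀ j, ‖z j‖ = 1) :
    ‖(z 0 + z 1 + z 2)^2 - 2 * (z 2)^2‖ ≤ 5 * Real.sqrt 2 := by
  have hc : z 2 * starRingEnd ℂ (z 2) = 1 := by
    rw [Complex.mul_conj]
    norm_cast
    rw [← Complex.sq_norm, h 2]; norm_num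
  set a : ℂ := z 0 * starRingEnd ℂ (z 2) with hadef
  set b : ℂ := z 1 * starRingEnd ℂ (z 2) with hbdef
  have ha : ‖a‖ = 1 := by
    rw [hadef, norm_mul, Complex.norm_conj, h 0, h 2]; norm_num
  have hb : ‖b‖ = 1 := by
    rw [hbdef, norm_mul, Complex.norm_conj, h 1, h 2]; norm_num
  have h1 : (1 + a + b) * z 2 = z 2 + z 0 + z 1 := by
    rw [hadef, hbdef]; linear_combination (z 0 + z 1) * hc
  have h2 : ((1 + a + b) * z 2)^2 = (z 2 + z 0 + z 1)^2 := by rw [h1]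
  have key : (z 0 + z 1 + z 2)^2 - 2 * (z 2)^2 = (z 2)^2 * ((1 + a + b)^2 - 2) := by
    linear_combination -h2
  rw [key, norm_mul, norm_pow, h 2]
  simpa using ub_aux a b ha hb

noncomputable def w : Fin 3 → ℂ := ![⟨3/4, Real.sqrt 7 / 4⟩, ⟨3/4, Real.sqrt 7 / 4⟩, 1]

lemma h7 : Real.sqrt 7 ^ 2 = 7 := Real.sq_sqrt (by norm_num)

lemma w_torus : ∀ j, ‖w j‖ = 1 := by
  have habs : ‖(⟨3/4, Real.sqrt 7 / 4⟩ : ℂ)‖ = 1 := by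
    rw [Complex.norm_def, Complex.normSq_mk]
    rw [show (3/4 : ℝ) * (3/4) + Real.sqrt 7 / 4 * (Real.sqrt 7 / 4) = 1 by
      nlinarith [h7]]
    exact Real.sqrt_one
  intro j
  fin_cases j <;> simp [w, habs]

lemma w_val : ‖(w 0 + w 1 + w 2)^2 - 2 * (w 2)^2‖ = 5 * Real.sqrt 2 := by
  have hval : (w 0 + w 1 + w 2)^2 - 2 * (w 2)^2 = ⟨5/2, 5 * Real.sqrt 7 / 2⟩ := by
    apply Complex.ext <;>
      simp [w, pow_two, Complex.mul_re, Complex.mul_im, Complex.add_re, Complex.add_im] <;>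
      nlinarith [h7]
  rw [hval, Complex.norm_def, Complex.normSq_mk]
  rw [show (5/2 : ℝ) * (5/2) + 5 * Real.sqrt 7 / 2 * (5 * Real.sqrt 7 / 2) = 5^2 * 2 by
    nlinarith [h7]]
  rw [Real.sqrt_mul (by positivity), Real.sqrt_sq (by norm_num)]

lemma sum_eq (z : Fin 3 → ℂ) :
    (∑ j, ∑ k, (!![(1:ℂ), 1, 1; 1, 1, 1; 1, 1, -1]) j k * z j * z k)
      = (z 0 + z 1 + z 2)^2 - 2 * (z 2)^2 := by
  simp [Fin.sum_univ_three]
  ring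

/-- from the table in Section 3 of Gupta–Ray.  For the symmetric sign
matrix `A = [[1,1,1],[1,1,1],[1,1,−1]]`, the associated homogeneous degree-two polynomial has
supremum norm `5√2` on the torus. -/
theorem stmt16 :
    sSup {r : ℝ | ∃ z : Fin 3 → ℂ, (∀ j, ‖z j‖ = 1) ∧
      r = ‖∑ j, ∑ k,
        (!![(1:ℂ), 1, 1; 1, 1, 1; 1, 1, -1]) j k * z j * z k‖} = 5 * Real.sqrt 2 := by
  have hub : ∀ r ∈ {r : ℝ | ∃ z : Fin 3 → ℂ, (∀ j, ‖z j‖ = 1) ∧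
      r = ‖∑ j, ∑ k,
        (!![(1:ℂ), 1, 1; 1, 1, 1; 1, 1, -1]) j k * z j * z k‖}, r ≤ 5 * Real.sqrt 2 := by
    rintro r ⟨z, hz, rfl⟩
    rw [sum_eq]
    exact stmt16_ub z hz
  have hmem : 5 * Real.sqrt 2 ∈ {r : ℝ | ∃ z : Fin 3 → ℂ, (∀ j, ‖z j‖ = 1) ∧
      r = ‖∑ j, ∑ k,
        (!![(1:ℂ), 1, 1; 1, 1, 1; 1, 1, -1]) j k * z j * z k‖} := by
    exact ⟨w, w_torus, by rw [sum_eq]; exact w_val.symm⟩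
  exact le_antisymm (csSup_le ⟨_, hmem⟩ hub) (le_csSup ⟨_, hub⟩ hmem)
end

section
/- For α ≤ −1/2, let B_α be the symmetric 3×3 matrix [[1,1,1],[1,1,α],[1,α,1]] and set M_{B_α} = sup{|Σ_{j,k=1}^3 (B_α)_{jk} z_j conj(z_k)| : |z_j| = 1 for all j} = sup{|3 + 2(cos θ + cos φ + α cos(θ − φ))| : θ, φ ∈ ℝ}. Then M_{B_α} = 3 − 2α − 1/α. -/
noncomputable section

/-- The quantity `M_B = sup{|Σ_{j,k} b_{jk} z_j conj(z_k)| : |z_j| = 1}` for a `3 × 3`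
complex matrix `B`. -/
def Mquantity (B : Matrix (Fin 3) (Fin 3) ℂ) : ℝ :=
  sSup {r : ℝ | ∃ z : Fin 3 → ℂ, (∀ j, ‖z j‖ = 1) ∧
    r = ‖∑ j, ∑ k, B j k * z j * (starRingEnd ℂ) (z k)‖}

/-- The matrix `B_α = [[1,1,1],[1,1,α],[1,α,1]]`. -/
def Bmat (α : ℝ) : Matrix (Fin 3) (Fin 3) ℂ := !![1, 1, 1; 1, 1, (α:ℂ); 1, (α:ℂ), 1]

open Complex

lemma bmat_sum (α : ℝ) (z : Fin 3 → ℂ) :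
    ∑ j, ∑ k, Bmat α j k * z j * (starRingEnd ℂ) (z k) =
      z 0 * (starRingEnd ℂ) (z 0) + z 1 * (starRingEnd ℂ) (z 1) + z 2 * (starRingEnd ℂ) (z 2)
      + (z 1 * (starRingEnd ℂ) (z 0) + (starRingEnd ℂ) (z 1 * (starRingEnd ℂ) (z 0)))
      + (z 2 * (starRingEnd ℂ) (z 0) + (starRingEnd ℂ) (z 2 * (starRingEnd ℂ) (z 0)))
      + (α:ℂ) * (z 1 * (starRingEnd ℂ) (z 2) + (starRingEnd ℂ) (z 1 * (starRingEnd ℂ) (z 2))) := by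
  simp only [Fin.sum_univ_three, Bmat, Matrix.cons_val', Matrix.cons_val_zero, Matrix.cons_val_one,
    Matrix.head_cons, Matrix.empty_val', Matrix.cons_val_fin_one, Matrix.head_fin_const,
    Matrix.cons_val_two, Matrix.tail_cons, map_mul, Complex.conj_conj, Matrix.of_apply]
  ring

lemma exp_pair (x : ℝ) :
    Complex.exp (x * I) + (starRingEnd ℂ) (Complex.exp (x * I)) = ((2 * Real.cos x : ℝ) : ℂ) := by
  rw [Complex.add_conj, Complex.exp_ofReal_mul_I_re]

lemma key_s18 (α θ φ : ℝ) (z : Fin 3 → ℂ) (hz : ∀ j, ‖z j‖ = 1)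
    (h1 : z 1 * (starRingEnd ℂ) (z 0) = Complex.exp (θ * I))
    (h2 : z 2 * (starRingEnd ℂ) (z 0) = Complex.exp (φ * I)) :
    ∑ j, ∑ k, Bmat α j k * z j * (starRingEnd ℂ) (z k)
      = ((3 + 2 * (Real.cos θ + Real.cos φ + α * Real.cos (θ - φ)) : ℝ) : ℂ) := by
  have hzz : ∀ j, z j * (starRingEnd ℂ) (z j) = 1 := by
    intro j
    rw [Complex.mul_conj]
    norm_cast
    rw [Complex.normSq_eq_norm_sq, hz]
    norm_num
  have h12 : z 1 * (starRingEnd ℂ) (z 2) = Complex.exp (((θ - φ : ℝ) : ℂ) * I) := by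
    calc z 1 * (starRingEnd ℂ) (z 2)
        = (z 1 * (starRingEnd ℂ) (z 2)) * (z 0 * (starRingEnd ℂ) (z 0)) := by
          rw [hzz 0, mul_one]
      _ = (z 1 * (starRingEnd ℂ) (z 0)) * (starRingEnd ℂ) (z 2 * (starRingEnd ℂ) (z 0)) := by
          rw [map_mul, Complex.conj_conj]; ring
      _ = Complex.exp (θ * I) * (starRingEnd ℂ) (Complex.exp (φ * I)) := by rw [h1, h2]
      _ = Complex.exp (θ * I) * Complex.exp (-(φ * I)) := by
          rw [← Complex.exp_conj]; norm_num
      _ = Complex.exp (((θ - φ : ℝ) : ℂ) * I) := by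
          rw [← Complex.exp_add]; push_cast; ring_nf
  rw [bmat_sum, hzz 0, hzz 1, hzz 2, h1, h2, h12, exp_pair, exp_pair, exp_pair]
  push_cast
  ring

lemma set_eq (α : ℝ) :
    {r : ℝ | ∃ z : Fin 3 → ℂ, (∀ j, ‖z j‖ = 1) ∧
      r = ‖∑ j, ∑ k, Bmat α j k * z j * (starRingEnd ℂ) (z k)‖}
    = {r : ℝ | ∃ θ φ : ℝ,
        r = |3 + 2 * (Real.cos θ + Real.cos φ + α * Real.cos (θ - φ))|} := by
  ext r
  constructor
  · rintro ⟨z, hz, rfl⟩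
    refine ⟨(z 1 * (starRingEnd ℂ) (z 0)).arg, (z 2 * (starRingEnd ℂ) (z 0)).arg, ?_⟩
    have hw : ∀ j : Fin 3, ‖z j * (starRingEnd ℂ) (z 0)‖ = 1 := by
      intro j; rw [norm_mul, Complex.norm_conj, hz, hz, mul_one]
    have h1 : z 1 * (starRingEnd ℂ) (z 0)
        = Complex.exp ((z 1 * (starRingEnd ℂ) (z 0)).arg * I) := by
      conv_lhs => rw [← Complex.norm_mul_exp_arg_mul_I (z 1 * (starRingEnd ℂ) (z 0))]
      rw [hw 1]; norm_num
    have h2 : z 2 * (starRingEnd ℂ) (z 0)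
        = Complex.exp ((z 2 * (starRingEnd ℂ) (z 0)).arg * I) := by
      conv_lhs => rw [← Complex.norm_mul_exp_arg_mul_I (z 2 * (starRingEnd ℂ) (z 0))]
      rw [hw 2]; norm_num
    rw [key_s18 α _ _ z hz h1 h2, Complex.norm_real, Real.norm_eq_abs]
  · rintro ⟨θ, φ, rfl⟩
    refine ⟨![1, Complex.exp (θ * I), Complex.exp (φ * I)], ?_, ?_⟩
    · intro j; fin_cases j <;> simp [Complex.norm_exp_ofReal_mul_I]
    · rw [key_s18 α θ φ _ ?_ ?_ ?_, Complex.norm_real, Real.norm_eq_abs]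
      · intro j; fin_cases j <;> simp [Complex.norm_exp_ofReal_mul_I]
      · simp
      · simp

lemma sup_val (α : ℝ) (hα : α ≤ -(1/2)) :
    sSup {r : ℝ | ∃ θ φ : ℝ,
        r = |3 + 2 * (Real.cos θ + Real.cos φ + α * Real.cos (θ - φ))|}
      = 3 - 2 * α - 1 / α := by
  have hneg : α < 0 := lt_of_le_of_lt hα (by norm_num)
  have h1α : 1 / α < 0 := one_div_neg.mpr hneg
  -- upper bound
  have hub : ∀ r ∈ {r : ℝ | ∃ θ φ : ℝ,
      r = |3 + 2 * (Real.cos θ + Real.cos φ + α * Real.cos (θ - φ))|},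
      r ≤ 3 - 2 * α - 1 / α := by
    rintro r ⟨θ, φ, rfl⟩
    rw [abs_le]
    constructor
    · have hct : α * Real.cos (θ - φ) ≥ α := by nlinarith [Real.cos_le_one (θ - φ)]
      have := Real.neg_one_le_cos θ
      have := Real.neg_one_le_cos φ
      linarith
    · have hsum : Real.cos θ + Real.cos φ
          = 2 * Real.cos ((θ + φ) / 2) * Real.cos ((θ - φ) / 2) := Real.cos_add_cos θ φ
      have hdd : Real.cos (θ - φ) = 2 * Real.cos ((θ - φ) / 2) ^ 2 - 1 := by
        have h2 := Real.cos_two_mul ((θ - φ) / 2)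
        have h : 2 * ((θ - φ) / 2) = θ - φ := by ring
        rw [h] at h2
        exact h2
      set s := Real.cos ((θ + φ) / 2) with hs
      set d := Real.cos ((θ - φ) / 2) with hd
      have hs2 : s ^ 2 ≤ 1 := by
        nlinarith [Real.cos_le_one ((θ + φ)/2), Real.neg_one_le_cos ((θ + φ)/2)]
      have hkey : 4 * α ^ 2 * d ^ 2 + 4 * α * s * d + 1 ≥ 0 := by
        nlinarith [sq_nonneg (2 * α * d + s)]
      have hdiv : (1:ℝ) / α ≤ 3 - 2 * α - (3 + 2 * (Real.cos θ + Real.cos φ + α * Real.cos (θ - φ))) := by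
        rw [div_le_iff_of_neg hneg, hsum, hdd]
        nlinarith [hkey]
      linarith
  -- attained
  have h2α : 2 * α ≤ -1 := by linarith
  set c : ℝ := -1 / (2 * α) with hc
  have hc1 : c ≤ 1 := by
    rw [hc, div_le_iff_of_neg (by linarith : 2 * α < 0)]; linarith
  have hc0 : 0 < c := by
    rw [hc, div_pos_iff]; right; constructor <;> [norm_num; linarith]
  have hcos : Real.cos (Real.arccos c) = c := Real.cos_arccos (by linarith) hc1
  have hmem : (3 - 2 * α - 1 / α) ∈ {r : ℝ | ∃ θ φ : ℝ,
      r = |3 + 2 * (Real.cos θ + Real.cos φ + α * Real.cos (θ - φ))|} := by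
    refine ⟨Real.arccos c, -Real.arccos c, ?_⟩
    have hdd : Real.arccos c - -Real.arccos c = 2 * Real.arccos c := by ring
    rw [Real.cos_neg, hdd, Real.cos_two_mul, hcos]
    have hval : 3 + 2 * (c + c + α * (2 * c ^ 2 - 1)) = 3 - 2 * α - 1 / α := by
      have hne : α ≠ 0 := ne_of_lt hneg
      rw [hc]; field_simp; ring
    rw [hval, abs_of_pos (by linarith)]
  exact le_antisymm (csSup_le ⟨_, hmem⟩ hub) (le_csSup ⟨_, hub⟩ hmem)

/-- Gupta–Ray, Section 3.1.  For `α ≤ −1/2`, the quantity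
`M_{B_α} = sup{|Σ_{j,k} (B_α)_{jk} z_j conj(z_k)| : |z_j| = 1}
        = sup_{θ,φ} |3 + 2(cos θ + cos φ + α cos(θ − φ))|`
equals `3 − 2α − 1/α`. -/
theorem stmt18 (α : ℝ) (hα : α ≤ -(1/2)) :
    Mquantity (Bmat α) =
      sSup {r : ℝ | ∃ θ φ : ℝ,
        r = |3 + 2 * (Real.cos θ + Real.cos φ + α * Real.cos (θ - φ))|} ∧
    Mquantity (Bmat α) = 3 - 2 * α - 1 / α := by

  have h1 : Mquantity (Bmat α) =
      sSup {r : ℝ | ∃ θ φ : ℝ,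
        r = |3 + 2 * (Real.cos θ + Real.cos φ + α * Real.cos (θ - φ))|} := by
    unfold Mquantity
    rw [set_eq α]
  exact ⟨h1, h1.trans (sup_val α hα)⟩


end
end

section
/- For every α < 0, with B_α = [[1,1,1],[1,1,α],[1,α,1]], one has M_{B_α} ≤ (6/5) · sup{|Σ_{j,k=1}^3 (B_α)_{jk} z_j z_k| : |z_j| = 1 for all j}, with equality if and only if α = −1; that is, among the family {B_α : α < 0} the Varopoulos–Kaijser case α = −1 maximizes the ratio M_{B_α} / ‖p_{B_α}‖_{𝔻³,∞}, the maximal ratio being 6/5. -/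
noncomputable section

/-- The supremum norm `‖p_B‖_{𝔻³,∞} = sup{|Σ_{j,k} b_{jk} z_j z_k| : |z_j| = 1}`. -/
def polyNorm (B : Matrix (Fin 3) (Fin 3) ℂ) : ℝ :=
  sSup {r : ℝ | ∃ z : Fin 3 → ℂ, (∀ j, ‖z j‖ = 1) ∧
    r = ‖∑ j, ∑ k, B j k * z j * z k‖}

/-! ### Auxiliary real inequalities -/

lemma key_uc (u c : ℝ) (hu0 : 0 ≤ u) (hu1 : u ≤ 1) (hc1 : -1 ≤ c) (hc : c ≤ 1) :
    0 ≤ 2*c^2 + 3*u*(u+c) - 2*u^2*(u+c)^2 := by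
  nlinarith [sq_nonneg (u+c/2), sq_nonneg (u*(u+c)-c), sq_nonneg (u*(u+c)+c),
    mul_nonneg (mul_nonneg hu0 (by linarith : (0:ℝ) ≤ 1-u)) (sq_nonneg (u+c)),
    mul_nonneg (by linarith : (0:ℝ) ≤ 1-c) (by linarith : (0:ℝ) ≤ 1+c),
    mul_nonneg hu0 (by linarith : (0:ℝ) ≤ 1-c),
    mul_nonneg (mul_nonneg hu0 hu0) (mul_nonneg (by linarith : (0:ℝ) ≤ 1-c) (by linarith : (0:ℝ) ≤ 1+c)),
    sq_nonneg (u*(u+c)-1), sq_nonneg (2*u*(u+c)-c), sq_nonneg (u-c), sq_nonneg (u+c)]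

lemma real5 (u c d : ℝ) (h : c^2+d^2 = 1) (hu0 : 0 ≤ u) (hu1 : u ≤ 1) :
    (1+4*u*c+4*(u^2-1)*(c^2-d^2))^2 + (4*u*d+4*(u^2-1)*(2*c*d))^2 ≤ 25 := by
  have hc1 : -1 ≤ c := by nlinarith [sq_nonneg d]
  have hc2 : c ≤ 1 := by nlinarith [sq_nonneg d]
  have key := key_uc u c hu0 hu1 hc1 hc2
  have h0 : c^2+d^2-1 = 0 := by linarith
  have h1 : (-24 - 16*d^2 - 16*c^2 + 32*u*c + 24*u^2 + 32*u^2*d^2 + 32*u^2*c^2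
      - 32*u^3*c - 16*u^4 - 16*u^4*d^2 - 16*u^4*c^2) * (c^2+d^2-1) = 0 := by
    rw [h0]; ring
  have hid : 25 - ((1+4*u*c+4*(u^2-1)*(c^2-d^2))^2 + (4*u*d+4*(u^2-1)*(2*c*d))^2)
      = 8*(2*c^2+3*u*(u+c)-2*u^2*(u+c)^2)
        + (-24 - 16*d^2 - 16*c^2 + 32*u*c + 24*u^2 + 32*u^2*d^2 + 32*u^2*c^2
      - 32*u^3*c - 16*u^4 - 16*u^4*d^2 - 16*u^4*c^2) * (c^2+d^2-1) := by ring
  linarith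

/-! ### The Varopoulos–Kaijser sup-norm bound -/

lemma vk_E (u : ℝ) (w : ℂ) (hu0 : 0 ≤ u) (hu1 : u ≤ 1) (hw : ‖w‖ = 1) :
    ‖1 + 4*(u:ℂ)*w + 4*((u:ℂ)^2-1)*w^2‖ ≤ 5 := by
  set E : ℂ := 1 + 4*(u:ℂ)*w + 4*((u:ℂ)^2-1)*w^2 with hE
  have hcd : w.re^2 + w.im^2 = 1 := by
    have h := Complex.sq_norm w
    rw [hw, Complex.normSq_apply] at h
    nlinarith [h]
  have hre : E.re = 1+4*u*w.re+4*(u^2-1)*(w.re^2-w.im^2) := by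
    simp only [hE, Complex.add_re, Complex.one_re, Complex.mul_re, Complex.mul_im,
      Complex.re_ofNat, Complex.im_ofNat, Complex.ofReal_re, Complex.ofReal_im,
      Complex.sub_re, Complex.sub_im, Complex.one_im, Complex.add_im, pow_two]
    ring
  have him : E.im = 4*u*w.im+4*(u^2-1)*(2*w.re*w.im) := by
    simp only [hE, Complex.add_re, Complex.one_re, Complex.mul_re, Complex.mul_im,
      Complex.re_ofNat, Complex.im_ofNat, Complex.ofReal_re, Complex.ofReal_im,
      Complex.sub_re, Complex.sub_im, Complex.one_im, Complex.add_im, pow_two]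
    ring
  have hsq : ‖E‖ ^ 2 ≤ 25 := by
    rw [Complex.sq_norm, Complex.normSq_apply, ← pow_two, ← pow_two, hre, him]
    exact real5 u w.re w.im hcd hu0 hu1
  nlinarith [norm_nonneg E, hsq]

lemma vk5 (a b : ℂ) (ha : ‖a‖ = 1) (hb : ‖b‖ = 1) :
    ‖1 + a^2 + b^2 + 2*a + 2*b - 2*a*b‖ ≤ 5 := by
  have hconj_a : a * (starRingEnd ℂ) a = 1 := by
    rw [Complex.mul_conj]; norm_cast; rw [← Complex.sq_norm, ha]; norm_num
  have hconj_b : b * (starRingEnd ℂ) b = 1 := by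
    rw [Complex.mul_conj]; norm_cast; rw [← Complex.sq_norm, hb]; norm_num
  by_cases h0 : a + b = 0
  · have hb' : b = -a := by linear_combination h0
    have heq : (1 : ℂ) + a^2 + b^2 + 2*a + 2*b - 2*a*b = 1 + 4*a^2 := by rw [hb']; ring
    rw [heq]
    calc ‖1 + 4*a^2‖ ≤ ‖1‖ + ‖4*a^2‖ := norm_add_le _ _
    _ = 5 := by rw [norm_mul, norm_pow, ha]; simp; norm_num
  · set r := ‖a+b‖ with hr
    have hrpos : 0 < r := by rw [hr]; exact norm_pos_iff.mpr h0
    set w : ℂ := (a+b) / r with hwdef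
    have hrne : (r:ℂ) ≠ 0 := by exact_mod_cast hrpos.ne'
    have hwabs : ‖w‖ = 1 := by
      rw [hwdef, norm_div, Complex.norm_real, Real.norm_eq_abs, abs_of_pos hrpos, ← hr, div_self hrpos.ne']
    have hab : a + b = r * w := by rw [hwdef]; field_simp
    have h3 : (a+b)^2 = a*b*(r:ℂ)^2 := by
      have hr2 : ((r:ℂ))^2 = (a+b) * ((starRingEnd ℂ) a + (starRingEnd ℂ) b) := by
        have h4 : (a+b) * (starRingEnd ℂ) (a+b) = ((‖a+b‖ ^2 : ℝ) : ℂ) := by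
          rw [Complex.mul_conj, Complex.sq_norm]
        rw [← map_add]; rw [h4, ← hr]; push_cast; ring
      have h2 : a*b*((starRingEnd ℂ) a + (starRingEnd ℂ) b) = a + b := by
        have hx : a*b*((starRingEnd ℂ) a + (starRingEnd ℂ) b)
            = (a * (starRingEnd ℂ) a) * b + (b * (starRingEnd ℂ) b) * a := by ring
        rw [hx, hconj_a, hconj_b]; ring
      calc (a+b)^2 = (a+b)*(a+b) := by ring
      _ = (a*b*((starRingEnd ℂ) a + (starRingEnd ℂ) b))*(a+b) := by rw [h2]
      _ = a*b*((a+b) * ((starRingEnd ℂ) a + (starRingEnd ℂ) b)) := by ring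
      _ = a*b*(r:ℂ)^2 := by rw [← hr2]
    have hw2 : w^2 = a * b := by
      rw [hwdef, div_pow, h3]
      field_simp
    set u : ℝ := r/2 with hu
    have hu0 : 0 ≤ u := by positivity
    have hu1 : u ≤ 1 := by
      have hrle : r ≤ 2 := by
        calc r = ‖a+b‖ := hr
        _ ≤ ‖a‖ + ‖b‖ := norm_add_le _ _
        _ = 2 := by rw [ha, hb]; norm_num
      rw [hu]; linarith
    have hucast : (u:ℂ) = (r:ℂ)/2 := by rw [hu]; push_cast; ring
    have hEeq : (1 : ℂ) + a^2 + b^2 + 2*a + 2*b - 2*a*b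
        = 1 + 4*(u:ℂ)*w + 4*((u:ℂ)^2-1)*w^2 := by
      calc (1 : ℂ) + a^2 + b^2 + 2*a + 2*b - 2*a*b
          = 1 + 2*(a+b) + ((a+b)^2 - 4*w^2) := by rw [hw2]; ring
        _ = 1 + 2*((r:ℂ)*w) + (a*b*(r:ℂ)^2 - 4*w^2) := by rw [h3, hab]
        _ = 1 + 4*(u:ℂ)*w + 4*((u:ℂ)^2-1)*w^2 := by rw [← hw2, hucast]; ring
    rw [hEeq]
    exact vk_E u w hu0 hu1 hwabs

/-! ### Sum expansions -/

lemma Msum (α : ℝ) (z : Fin 3 → ℂ) :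
    (∑ j, ∑ k, Bmat α j k * z j * (starRingEnd ℂ) (z k))
    = z 0 * (starRingEnd ℂ) (z 0) + z 1 * (starRingEnd ℂ) (z 1) + z 2 * (starRingEnd ℂ) (z 2)
      + (z 0 * (starRingEnd ℂ) (z 1) + z 1 * (starRingEnd ℂ) (z 0))
      + (z 0 * (starRingEnd ℂ) (z 2) + z 2 * (starRingEnd ℂ) (z 0))
      + (α:ℂ) * (z 1 * (starRingEnd ℂ) (z 2) + z 2 * (starRingEnd ℂ) (z 1)) := by
  simp [Bmat, Fin.sum_univ_three]
  ring

lemma Psum (α : ℝ) (z : Fin 3 → ℂ) :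
    (∑ j, ∑ k, Bmat α j k * z j * z k)
    = z 0^2 + z 1^2 + z 2^2 + 2*(z 0)*(z 1) + 2*(z 0)*(z 2) + 2*(α:ℂ)*(z 1)*(z 2) := by
  simp [Bmat, Fin.sum_univ_three]
  ring

lemma Mval (α : ℝ) (z : Fin 3 → ℂ) (hz : ∀ j, ‖z j‖ = 1) :
    ∃ p s q t : ℝ, p^2+s^2=1 ∧ q^2+t^2=1 ∧
      ‖∑ j, ∑ k, Bmat α j k * z j * (starRingEnd ℂ) (z k)‖
        = |3+2*p+2*q+2*α*(p*q+s*t)| := by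
  set a := z 0 * (starRingEnd ℂ) (z 1) with hadef
  set b := z 0 * (starRingEnd ℂ) (z 2) with hbdef
  have habs : ∀ j, z j * (starRingEnd ℂ) (z j) = 1 := by
    intro j
    rw [Complex.mul_conj]
    norm_cast
    rw [← Complex.sq_norm, hz j]; norm_num
  have haabs : ‖a‖ = 1 := by
    rw [hadef, norm_mul, Complex.norm_conj, hz 0, hz 1]; norm_num
  have hbabs : ‖b‖ = 1 := by
    rw [hbdef, norm_mul, Complex.norm_conj, hz 0, hz 2]; norm_num
  have ha1 : a.re^2 + a.im^2 = 1 := by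
    have h := Complex.sq_norm a; rw [haabs, Complex.normSq_apply] at h; nlinarith [h]
  have hb1 : b.re^2 + b.im^2 = 1 := by
    have h := Complex.sq_norm b; rw [hbabs, Complex.normSq_apply] at h; nlinarith [h]
  refine ⟨a.re, a.im, b.re, b.im, ha1, hb1, ?_⟩
  have hA : z 0 * (starRingEnd ℂ) (z 1) + z 1 * (starRingEnd ℂ) (z 0)
      = ((2*a.re : ℝ) : ℂ) := by
    have : z 1 * (starRingEnd ℂ) (z 0) = (starRingEnd ℂ) a := by
      rw [hadef, map_mul, Complex.conj_conj]; ring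
    rw [this, ← hadef, Complex.add_conj]
  have hB : z 0 * (starRingEnd ℂ) (z 2) + z 2 * (starRingEnd ℂ) (z 0)
      = ((2*b.re : ℝ) : ℂ) := by
    have : z 2 * (starRingEnd ℂ) (z 0) = (starRingEnd ℂ) b := by
      rw [hbdef, map_mul, Complex.conj_conj]; ring
    rw [this, ← hbdef, Complex.add_conj]
  have hc : z 1 * (starRingEnd ℂ) (z 2) = (starRingEnd ℂ) a * b := by
    have h0 := habs 0
    rw [hadef, hbdef, map_mul, Complex.conj_conj]
    linear_combination (-(z 1 * (starRingEnd ℂ) (z 2))) * h0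
  have hcre : ((starRingEnd ℂ) a * b).re = a.re*b.re + a.im*b.im := by
    simp [Complex.mul_re]
  have hC : z 1 * (starRingEnd ℂ) (z 2) + z 2 * (starRingEnd ℂ) (z 1)
      = ((2*(a.re*b.re + a.im*b.im) : ℝ) : ℂ) := by
    have h2 : z 2 * (starRingEnd ℂ) (z 1) = (starRingEnd ℂ) ((starRingEnd ℂ) a * b) := by
      rw [map_mul, Complex.conj_conj, hadef, hbdef, map_mul, Complex.conj_conj]
      linear_combination (-(z 2 * (starRingEnd ℂ) (z 1))) * habs 0
    rw [hc, h2, Complex.add_conj, hcre]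
  have hsum : (∑ j, ∑ k, Bmat α j k * z j * (starRingEnd ℂ) (z k))
      = ((3+2*a.re+2*b.re+2*α*(a.re*b.re+a.im*b.im) : ℝ) : ℂ) := by
    rw [Msum, habs 0, habs 1, habs 2, hA, hB, hC]
    push_cast; ring
  rw [hsum, Complex.norm_real, Real.norm_eq_abs]

/-! ### Bounds on the suprema -/

lemma M_nonempty (α : ℝ) : {r : ℝ | ∃ z : Fin 3 → ℂ, (∀ j, ‖z j‖ = 1) ∧
    r = ‖∑ j, ∑ k, Bmat α j k * z j * (starRingEnd ℂ) (z k)‖}.Nonempty :=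
  ⟨_, fun _ => 1, fun _ => by simp, rfl⟩

lemma P_nonempty (α : ℝ) : {r : ℝ | ∃ z : Fin 3 → ℂ, (∀ j, ‖z j‖ = 1) ∧
    r = ‖∑ j, ∑ k, Bmat α j k * z j * z k‖}.Nonempty :=
  ⟨_, fun _ => 1, fun _ => by simp, rfl⟩

lemma M_le (α c : ℝ) (hc : ∀ z : Fin 3 → ℂ, (∀ j, ‖z j‖ = 1) →
    ‖∑ j, ∑ k, Bmat α j k * z j * (starRingEnd ℂ) (z k)‖ ≤ c) :
    Mquantity (Bmat α) ≤ c := by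
  apply csSup_le (M_nonempty α)
  rintro r ⟨z, hz, rfl⟩
  exact hc z hz

lemma P_le (α c : ℝ) (hc : ∀ z : Fin 3 → ℂ, (∀ j, ‖z j‖ = 1) →
    ‖∑ j, ∑ k, Bmat α j k * z j * z k‖ ≤ c) :
    polyNorm (Bmat α) ≤ c := by
  apply csSup_le (P_nonempty α)
  rintro r ⟨z, hz, rfl⟩
  exact hc z hz

lemma M_bound (α : ℝ) (hα : α < 0) : ∀ z : Fin 3 → ℂ, (∀ j, ‖z j‖ = 1) →
    ‖∑ j, ∑ k, Bmat α j k * z j * (starRingEnd ℂ) (z k)‖ ≤ 3-2*α-1/α := by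
  intro z hz
  obtain ⟨p, s, q, t, h1, h2, heq⟩ := Mval α z hz
  rw [heq, abs_le]
  have hXub : 3*α - 2*α^2 - 1 ≤ α * (3+2*p+2*q+2*α*(p*q+s*t)) := by
    nlinarith [sq_nonneg (α*p+α*q+1), sq_nonneg (α*s+α*t), sq_nonneg α, h1, h2]
  have hXlb : 3*α - 2*α^2 - 1 ≤ α * (-(3+2*p+2*q+2*α*(p*q+s*t))) := by
    have hp : -1 ≤ p := by nlinarith [sq_nonneg s]
    have hq : -1 ≤ q := by nlinarith [sq_nonneg t]
    nlinarith [sq_nonneg (α*(p-q)), sq_nonneg (α*(s-t)), sq_nonneg α,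
      mul_nonneg (neg_nonneg.2 hα.le) (by linarith : (0:ℝ) ≤ p+1),
      mul_nonneg (neg_nonneg.2 hα.le) (by linarith : (0:ℝ) ≤ q+1)]
  have hα0 : α ≠ 0 := ne_of_lt hα
  have hform : (3:ℝ)-2*α-1/α = (3*α-2*α^2-1)/α := by
    field_simp
  constructor
  · rw [hform, ← neg_div, div_le_iff_of_neg hα]
    nlinarith [hXlb]
  · rw [hform, le_div_iff_of_neg hα]
    nlinarith [hXub]

lemma M_bound_half (α : ℝ) (hα : α < 0) (hα2 : -(1/2) ≤ α) :
    ∀ z : Fin 3 → ℂ, (∀ j, ‖z j‖ = 1) →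
    ‖∑ j, ∑ k, Bmat α j k * z j * (starRingEnd ℂ) (z k)‖ ≤ 7+2*α := by
  intro z hz
  obtain ⟨p, s, q, t, h1, h2, heq⟩ := Mval α z hz
  rw [heq, abs_le]
  have hp : -1 ≤ p := by nlinarith [sq_nonneg s]
  have hq : -1 ≤ q := by nlinarith [sq_nonneg t]
  constructor
  · have h3 : p*q+s*t ≤ 1 := by nlinarith [sq_nonneg (p-q), sq_nonneg (s-t)]
    nlinarith [mul_nonneg (neg_nonneg.2 hα.le) (by linarith : (0:ℝ) ≤ 1-(p*q+s*t))]
  · nlinarith [sq_nonneg (2-p-q), sq_nonneg (s+t),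
      mul_nonneg (by linarith : (0:ℝ) ≤ 1/2+α) (by positivity : (0:ℝ) ≤ (p-q)^2+(s-t)^2)]

lemma P_bddAbove (α : ℝ) : BddAbove {r : ℝ | ∃ z : Fin 3 → ℂ,
    (∀ j, ‖z j‖ = 1) ∧
    r = ‖∑ j, ∑ k, Bmat α j k * z j * z k‖} := by
  refine ⟨7 + 2*|α|, ?_⟩
  rintro r ⟨z, hz, rfl⟩
  rw [Psum]
  have habs : ∀ j, ‖z j ^ 2‖ = 1 := fun j => by
    rw [norm_pow, hz j]; norm_num
  calc ‖z 0^2 + z 1^2 + z 2^2 + 2*(z 0)*(z 1) + 2*(z 0)*(z 2)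
          + 2*(α:ℂ)*(z 1)*(z 2)‖
      ≤ ‖z 0^2 + z 1^2 + z 2^2 + 2*(z 0)*(z 1) + 2*(z 0)*(z 2)‖
        + ‖2*(α:ℂ)*(z 1)*(z 2)‖ := norm_add_le _ _
    _ ≤ (‖z 0^2 + z 1^2 + z 2^2 + 2*(z 0)*(z 1)‖
        + ‖2*(z 0)*(z 2)‖) + ‖2*(α:ℂ)*(z 1)*(z 2)‖ := by
        gcongr; exact norm_add_le _ _
    _ ≤ ((‖z 0^2 + z 1^2 + z 2^2‖ + ‖2*(z 0)*(z 1)‖)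
        + ‖2*(z 0)*(z 2)‖) + ‖2*(α:ℂ)*(z 1)*(z 2)‖ := by
        gcongr; exact norm_add_le _ _
    _ ≤ (((‖z 0^2 + z 1^2‖ + ‖z 2^2‖) + ‖2*(z 0)*(z 1)‖)
        + ‖2*(z 0)*(z 2)‖) + ‖2*(α:ℂ)*(z 1)*(z 2)‖ := by
        gcongr; exact norm_add_le _ _
    _ ≤ ((((‖z 0^2‖ + ‖z 1^2‖) + ‖z 2^2‖)
        + ‖2*(z 0)*(z 1)‖)
        + ‖2*(z 0)*(z 2)‖) + ‖2*(α:ℂ)*(z 1)*(z 2)‖ := by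
        gcongr; exact norm_add_le _ _
    _ = 7 + 2*|α| := by
        rw [habs 0, habs 1, habs 2]
        simp [norm_mul, hz 0, hz 1, hz 2, Complex.norm_real]
        ring

lemma M_bddAbove (α : ℝ) (hα : α < 0) : BddAbove {r : ℝ | ∃ z : Fin 3 → ℂ,
    (∀ j, ‖z j‖ = 1) ∧
    r = ‖∑ j, ∑ k, Bmat α j k * z j * (starRingEnd ℂ) (z k)‖} := by
  refine ⟨3-2*α-1/α, ?_⟩
  rintro r ⟨z, hz, rfl⟩
  exact M_bound α hα z hz

/-- Lower bound for polyNorm from the point (1,1,1). -/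
lemma P_ge_one (α : ℝ) : 7+2*α ≤ polyNorm (Bmat α) := by
  have hv : ‖∑ j, ∑ k, Bmat α j k * (![1,1,1] : Fin 3 → ℂ) j * (![1,1,1] : Fin 3 → ℂ) k‖
      = |7+2*α| := by
    rw [Psum]
    have h0 : (![1,1,1] : Fin 3 → ℂ) 0 = 1 := rfl
    have h1 : (![1,1,1] : Fin 3 → ℂ) 1 = 1 := rfl
    have h2 : (![1,1,1] : Fin 3 → ℂ) 2 = 1 := rfl
    rw [h0, h1, h2]
    have : ((1:ℂ))^2 + (1:ℂ)^2 + (1:ℂ)^2 + 2*1*1 + 2*1*1 + 2*(α:ℂ)*1*1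
        = ((7+2*α : ℝ) : ℂ) := by push_cast; ring
    rw [this, Complex.norm_real, Real.norm_eq_abs]
  refine le_trans (le_abs_self _) (le_csSup (P_bddAbove α) ⟨![1,1,1], ?_, hv.symm⟩)
  intro j
  fin_cases j <;> norm_num

/-- Lower bound for polyNorm from the point (1,1,-1). -/
lemma P_ge_two (α : ℝ) : 3-2*α ≤ polyNorm (Bmat α) := by
  have hv : ‖∑ j, ∑ k, Bmat α j k * (![1,1,-1] : Fin 3 → ℂ) j * (![1,1,-1] : Fin 3 → ℂ) k‖
      = |3-2*α| := by
    rw [Psum]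
    have h0 : (![1,1,-1] : Fin 3 → ℂ) 0 = 1 := rfl
    have h1 : (![1,1,-1] : Fin 3 → ℂ) 1 = 1 := rfl
    have h2 : (![1,1,-1] : Fin 3 → ℂ) 2 = -1 := rfl
    rw [h0, h1, h2]
    have : (1:ℂ)^2 + (1:ℂ)^2 + (-1:ℂ)^2 + 2*1*1 + 2*1*(-1) + 2*(α:ℂ)*1*(-1)
        = ((3-2*α : ℝ) : ℂ) := by push_cast; ring
    rw [this, Complex.norm_real, Real.norm_eq_abs]
  refine le_trans (le_abs_self _) (le_csSup (P_bddAbove α) ⟨![1,1,-1], ?_, hv.symm⟩)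
  intro j
  fin_cases j <;> norm_num


/-- The Varopoulos–Kaijser point giving M ≥ 6 at α = -1. -/
lemma M_ge_six : 6 ≤ Mquantity (Bmat (-1)) := by
  set w : ℂ := ⟨1/2, -(Real.sqrt 3/2)⟩ with hwdef
  have h3 : Real.sqrt 3 ^ 2 = 3 := Real.sq_sqrt (by norm_num)
  have hwre : w.re = 1/2 := rfl
  have hwim : w.im = -(Real.sqrt 3/2) := rfl
  have hnsq : Complex.normSq w = 1 := by
    rw [Complex.normSq_apply, hwre, hwim]; nlinarith [h3]
  have hwabs : ‖w‖ = 1 := by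
    rw [Complex.norm_def, hnsq, Real.sqrt_one]
  set z : Fin 3 → ℂ := ![1, w, (starRingEnd ℂ) w] with hzdef
  have hz : ∀ j, ‖z j‖ = 1 := by
    intro j
    fin_cases j
    · simp [hzdef]
    · simpa [hzdef] using hwabs
    · simpa [hzdef, Complex.norm_conj] using hwabs
  have hz0 : z 0 = 1 := rfl
  have hz1 : z 1 = w := rfl
  have hz2 : z 2 = (starRingEnd ℂ) w := rfl
  have hval : (∑ j, ∑ k, Bmat (-1) j k * z j * (starRingEnd ℂ) (z k)) = ((6:ℝ):ℂ) := by
    rw [Msum, hz0, hz1, hz2]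
    apply Complex.ext
    · simp [Complex.mul_re, Complex.mul_im, Complex.add_re, Complex.add_im,
        Complex.conj_re, Complex.conj_im, Complex.one_re, Complex.one_im,
        Complex.ofReal_re, Complex.ofReal_im, hwre, hwim]
      nlinarith [h3]
    · simp [Complex.mul_re, Complex.mul_im, Complex.add_re, Complex.add_im,
        Complex.conj_re, Complex.conj_im, Complex.one_re, Complex.one_im,
        Complex.ofReal_re, Complex.ofReal_im, hwre, hwim]
      ring
  have hmem : (6:ℝ) ∈ {r : ℝ | ∃ z : Fin 3 → ℂ, (∀ j, ‖z j‖ = 1) ∧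
      r = ‖∑ j, ∑ k, Bmat (-1) j k * z j * (starRingEnd ℂ) (z k)‖} := by
    refine ⟨z, hz, ?_⟩
    rw [hval, Complex.norm_real, Real.norm_eq_abs]
    norm_num
  exact le_csSup (M_bddAbove (-1) (by norm_num)) hmem

lemma P_le_five : polyNorm (Bmat (-1)) ≤ 5 := by
  apply P_le
  intro z hz
  set a : ℂ := z 1 * (starRingEnd ℂ) (z 0) with hadef
  set b : ℂ := z 2 * (starRingEnd ℂ) (z 0) with hbdef
  have h00 : z 0 * (starRingEnd ℂ) (z 0) = 1 := by
    rw [Complex.mul_conj]; norm_cast; rw [← Complex.sq_norm, hz 0]; norm_num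
  have haabs : ‖a‖ = 1 := by
    rw [hadef, norm_mul, Complex.norm_conj, hz 0, hz 1]; norm_num
  have hbabs : ‖b‖ = 1 := by
    rw [hbdef, norm_mul, Complex.norm_conj, hz 0, hz 2]; norm_num
  have heq : (∑ j, ∑ k, Bmat (-1) j k * z j * z k)
      = z 0^2 * (1 + a^2 + b^2 + 2*a + 2*b - 2*a*b) := by
    rw [Psum, hadef, hbdef]
    push_cast
    linear_combination (-((z 1^2 + z 2^2 - 2*z 1*z 2)*(1 + z 0 * (starRingEnd ℂ) (z 0))
      + 2*z 0*z 1 + 2*z 0*z 2)) * h00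
  rw [heq, norm_mul, norm_pow, hz 0]
  simpa using vk5 a b haabs hbabs

/-- extremality of the Varopoulos–Kaijser polynomial, Gupta–Ray,
Section 3.1.  For every `α < 0` one has `M_{B_α} ≤ (6/5)·‖p_{B_α}‖_{𝔻³,∞}`, with equality
precisely when `α = −1`: among the family `{B_α : α < 0}` the Varopoulos–Kaijser case
`α = −1` maximizes the ratio `M_{B_α} / ‖p_{B_α}‖_{𝔻³,∞}`, the maximal ratio being `6/5`. -/
theorem stmt19 (α : ℝ) (hα : α < 0) :
    Mquantity (Bmat α) ≤ (6 / 5) * polyNorm (Bmat α) ∧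
    (Mquantity (Bmat α) = (6 / 5) * polyNorm (Bmat α) ↔ α = -1) := by
  rcases eq_or_ne α (-1) with rfl | hne
  · have hM6 : Mquantity (Bmat (-1)) = 6 := by
      refine le_antisymm ?_ M_ge_six
      refine M_le (-1) 6 (fun z hz => ?_)
      have h := M_bound (-1) (by norm_num) z hz
      norm_num at h
      exact h
    have hP5 : polyNorm (Bmat (-1)) = 5 := by
      refine le_antisymm P_le_five ?_
      have h := P_ge_two (-1)
      norm_num at h
      exact h
    rw [hM6, hP5]
    norm_num
  · have hstrict : Mquantity (Bmat α) < 6/5 * polyNorm (Bmat α) := by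
      rcases lt_or_ge α (-1) with hlt | hge
      · have hub := M_le α (3-2*α-1/α) (M_bound α hα)
        have hP := P_ge_two α
        have harith : 3-2*α-1/α < 6/5*(3-2*α) := by
          have hD : 3-2*α-1/α - 6/5*(3-2*α) = ((2*α-5)*(α+1))/(5*α) := by
            have hα0 : α ≠ 0 := ne_of_lt hα
            field_simp
            ring
          have hneg : ((2*α-5)*(α+1))/(5*α) < 0 :=
            div_neg_of_pos_of_neg (by nlinarith) (by linarith)
          linarith
        linarith
      · have hge' : -1 < α := lt_of_le_of_ne hge (Ne.symm hne)
        rcases lt_or_ge α (-(5/22)) with h5 | h5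
        · have hub := M_le α (3-2*α-1/α) (M_bound α hα)
          have hP := P_ge_one α
          have harith : 3-2*α-1/α < 6/5*(7+2*α) := by
            have hD : 3-2*α-1/α - 6/5*(7+2*α) = (-((22*α+5)*(α+1)))/(5*α) := by
              have hα0 : α ≠ 0 := ne_of_lt hα
              field_simp
              ring
            have hneg : (-((22*α+5)*(α+1)))/(5*α) < 0 :=
              div_neg_of_pos_of_neg (by nlinarith) (by linarith)
            linarith
          linarith
        · have hub := M_le α (7+2*α) (M_bound_half α hα (by linarith))
          have hP := P_ge_one α
          linarith
    exact ⟨hstrict.le, ⟨fun h => absurd h (ne_of_lt hstrict), fun h => absurd h hne⟩⟩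

end
end
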